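/- arXiv:1408.2727 — 10 statements merged into one kernel-verified Lean document; each statement's English description precedes it below -/
import Mathlib

section
/- Suppose f = ι ∘ g with g : [0,∞) → V continuous, and let u be the strong solution of (ι∘u)'' = A u + ι g(t) with u(0) = 0, (ι∘u)'(0) = 0. Then for every t ≥ 0 one has C_T^{-1} ‖ι u(t)‖_H ≤ ‖u(t)‖_V ≤ ∫₀^t ‖ι g(τ)‖_H dτ. -/
open Set

/-- A strong solution of the second-order problem (ι∘u)'' = A u + f on [0,∞),
with u(0) = 0 and (ι∘u)'(0) = 0.  The fields `u'`, `w'`, `w''` record the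
V-valued derivative of u and the first and second H-valued derivatives of ι∘u. -/
structure StrongSol {H V : Type*} [NormedAddCommGroup H] [InnerProductSpace ℝ H]
    [NormedAddCommGroup V] [InnerProductSpace ℝ V]
    (ι : V →L[ℝ] H) (D : Submodule ℝ V) (A : D →ₗ[ℝ] H) (f : ℝ → H) where
  u : ℝ → D
  u' : ℝ → V
  w' : ℝ → H
  w'' : ℝ → H
  hasDeriv_u : ∀ t ∈ Ici (0:ℝ), HasDerivWithinAt (fun s => ((u s : V))) (u' t) (Ici 0) t
  cont_u' : ContinuousOn u' (Ici 0)
  hasDeriv_w : ∀ t ∈ Ici (0:ℝ), HasDerivWithinAt (fun s => ι ((u s : V))) (w' t) (Ici 0) t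
  hasDeriv_w' : ∀ t ∈ Ici (0:ℝ), HasDerivWithinAt w' (w'' t) (Ici 0) t
  cont_w'' : ContinuousOn w'' (Ici 0)
  cont_Au : ContinuousOn (fun t => A (u t)) (Ici 0)
  eqn : ∀ t ∈ Ici (0:ℝ), w'' t = A (u t) + f t
  init_u : ((u 0 : V)) = 0
  init_w' : w' 0 = 0

/-- For f = ι ∘ g with g continuous V-valued, the strong solution satisfies, for t ≥ 0,
C_T⁻¹ ‖ι u(t)‖_H ≤ ‖u(t)‖_V ≤ ∫₀ᵗ ‖ι g(τ)‖_H dτ. -/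
theorem stmt1 {H V : Type*} [NormedAddCommGroup H] [InnerProductSpace ℝ H] [CompleteSpace H]
    [NormedAddCommGroup V] [InnerProductSpace ℝ V] [CompleteSpace V]
    (ι : V →L[ℝ] H) (hinj : Function.Injective ι) (hcomp : IsCompactOperator ι)
    (hdense : DenseRange ι)
    (C_T : ℝ) (hCT : 0 < C_T) (hbd : ∀ v : V, ‖ι v‖ ≤ C_T * ‖v‖)
    (D : Submodule ℝ V) (A : D →ₗ[ℝ] H)
    (hGreen : ∀ (w : D) (v : V), (inner ℝ (A w) (ι v) : ℝ) + (inner ℝ ((w : V)) v : ℝ) = 0)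
    (hSurj : ∀ h : H, ∃ w : D, ι ((w : V)) - A w = h)
    (g : ℝ → V) (hg : ContinuousOn g (Ici 0))
    (sol : StrongSol ι D A (fun t => ι (g t))) :
    ∀ t ∈ Ici (0:ℝ),
      C_T⁻¹ * ‖ι ((sol.u t : V))‖ ≤ ‖((sol.u t : V))‖ ∧
      ‖((sol.u t : V))‖ ≤ ∫ τ in (0:ℝ)..t, ‖ι (g τ)‖ := by
  -- w' s = ι (u' s) on [0, ∞)
  have hιu' : ∀ s ∈ Ici (0:ℝ), sol.w' s = ι (sol.u' s) := by
    intro s hs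
    have h1 := sol.hasDeriv_w s hs
    have h2 : HasDerivWithinAt (fun r => ι ((sol.u r : V))) (ι (sol.u' s)) (Ici 0) s :=
      (ι.hasFDerivAt.comp_hasDerivWithinAt s (sol.hasDeriv_u s hs))
    have hu := (uniqueDiffOn_Ici (0:ℝ)) s hs
    rw [← h1.derivWithin hu, ← h2.derivWithin hu]
  -- energy
  set F : ℝ → ℝ := fun s =>
    (inner ℝ (sol.w' s) (sol.w' s) : ℝ) + (inner ℝ ((sol.u s : V)) ((sol.u s : V)) : ℝ) with hFdef
  have hFval : ∀ s, F s = ‖sol.w' s‖ ^ 2 + ‖(sol.u s : V)‖ ^ 2 := by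
    intro s
    simp [hFdef, real_inner_self_eq_norm_sq]
  have hF0 : F 0 = 0 := by
    rw [hFval, sol.init_w', sol.init_u]; simp
  have hFnn : ∀ s, 0 ≤ F s := by
    intro s; rw [hFval]; positivity
  -- derivative of the energy
  have hF : ∀ s ∈ Ici (0:ℝ),
      HasDerivWithinAt F (2 * (inner ℝ (ι (g s)) (sol.w' s) : ℝ)) (Ici 0) s := by
    intro s hs
    have hw := (sol.hasDeriv_w' s hs).inner ℝ (sol.hasDeriv_w' s hs)
    have hu := (sol.hasDeriv_u s hs).inner ℝ (sol.hasDeriv_u s hs)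
    have hsum := hw.add hu
    refine hsum.congr_deriv ?_
    have hgr := hGreen (sol.u s) (sol.u' s)
    have h1 : (inner ℝ (sol.w'' s) (sol.w' s) : ℝ)
        = (inner ℝ (A (sol.u s)) (ι (sol.u' s)) : ℝ) + (inner ℝ (ι (g s)) (sol.w' s) : ℝ) := by
      rw [sol.eqn s hs, inner_add_left, hιu' s hs]
    have h2 : (inner ℝ (sol.w' s) (sol.w'' s) : ℝ) = (inner ℝ (sol.w'' s) (sol.w' s) : ℝ) :=
      real_inner_comm _ _
    have h3 : (inner ℝ (sol.u' s) ((sol.u s : V)) : ℝ)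
        = (inner ℝ ((sol.u s : V)) (sol.u' s) : ℝ) := real_inner_comm _ _
    linarith
  -- the primitive of ‖ι (g ·)‖
  set P : ℝ → ℝ := fun s => ∫ τ in (0:ℝ)..s, ‖ι (g τ)‖ with hPdef
  have hgc : ContinuousOn (fun τ => ‖ι (g τ)‖) (Ici 0) :=
    (ι.continuous.comp_continuousOn hg).norm
  have hP : ∀ s ∈ Ici (0:ℝ), HasDerivWithinAt P (‖ι (g s)‖) (Ici 0) s := by
    intro s hs
    have hint : IntervalIntegrable (fun τ => ‖ι (g τ)‖) MeasureTheory.volume 0 s := by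
      apply ContinuousOn.intervalIntegrable
      apply hgc.mono
      rw [uIcc_of_le hs]
      exact Icc_subset_Ici_self
    rcases eq_or_lt_of_le (mem_Ici.mp hs) with h0 | h0
    · subst h0
      have hmeas : StronglyMeasurableAtFilter (fun τ => ‖ι (g τ)‖)
          (nhdsWithin (0:ℝ) (Ioi 0)) MeasureTheory.volume :=
        ⟨Ici 0, nhdsWithin_mono _ Ioi_subset_Ici_self self_mem_nhdsWithin,
          hgc.aestronglyMeasurable measurableSet_Ici⟩
      exact intervalIntegral.integral_hasDerivWithinAt_right hint hmeas
        ((hgc 0 self_mem_Ici).mono Ioi_subset_Ici_self)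
    · have hmeas : StronglyMeasurableAtFilter (fun τ => ‖ι (g τ)‖)
          (nhds s) MeasureTheory.volume :=
        ⟨Ici 0, Ici_mem_nhds h0, hgc.aestronglyMeasurable measurableSet_Ici⟩
      exact (intervalIntegral.integral_hasDerivAt_right hint hmeas
        (hgc.continuousAt (Ici_mem_nhds h0))).hasDerivWithinAt
  intro t ht
  constructor
  · rw [inv_mul_le_iff₀ hCT]
    exact hbd _
  · -- energy estimate with regularization
    have main : ∀ ε : ℝ, 0 < ε → Real.sqrt (F t + ε ^ 2) ≤ ε + P t := by
      intro ε hε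
      set φ : ℝ → ℝ := fun s => Real.sqrt (F s + ε ^ 2) - P s with hφdef
      have hφd : ∀ s ∈ Ici (0:ℝ), HasDerivWithinAt φ
          (1 / (2 * Real.sqrt (F s + ε ^ 2)) * (2 * (inner ℝ (ι (g s)) (sol.w' s) : ℝ))
            - ‖ι (g s)‖) (Ici 0) s := by
        intro s hs
        have hpos : 0 < F s + ε ^ 2 := add_pos_of_nonneg_of_pos (hFnn s) (pow_pos hε 2)
        have h1 : HasDerivWithinAt (fun r => F r + ε ^ 2)
            (2 * (inner ℝ (ι (g s)) (sol.w' s) : ℝ)) (Ici 0) s := (hF s hs).add_const _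
        have h2 := (Real.hasDerivAt_sqrt hpos.ne').comp_hasDerivWithinAt s h1
        exact h2.sub (hP s hs)
      have hφanti : AntitoneOn φ (Ici 0) := by
        apply antitoneOn_of_deriv_nonpos (convex_Ici 0)
        · intro s hs
          exact (hφd s hs).continuousWithinAt
        · intro s hs
          rw [interior_Ici] at hs
          exact (((hφd s (mem_Ici.mpr (le_of_lt (mem_Ioi.mp hs)))).hasDerivAt (Ici_mem_nhds hs)).differentiableAt).differentiableWithinAt
        · intro s hs
          rw [interior_Ici] at hs
          rw [((hφd s (mem_Ici.mpr (le_of_lt (mem_Ioi.mp hs)))).hasDerivAt (Ici_mem_nhds hs)).deriv]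
          -- show the derivative is ≤ 0
          have hpos : 0 < Real.sqrt (F s + ε ^ 2) :=
            Real.sqrt_pos.mpr (add_pos_of_nonneg_of_pos (hFnn s) (pow_pos hε 2))
          have hwle : ‖sol.w' s‖ ≤ Real.sqrt (F s + ε ^ 2) := by
            rw [show ‖sol.w' s‖ = Real.sqrt (‖sol.w' s‖ ^ 2) by
              rw [Real.sqrt_sq (norm_nonneg _)]]
            apply Real.sqrt_le_sqrt
            have := sq_nonneg ‖(sol.u s : V)‖
            rw [hFval]; nlinarith [sq_nonneg ε]
          have hib : (inner ℝ (ι (g s)) (sol.w' s) : ℝ) ≤ ‖ι (g s)‖ * ‖sol.w' s‖ :=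
            real_inner_le_norm _ _
          rw [sub_nonpos, one_div, inv_mul_le_iff₀ (by linarith)]
          have : ‖ι (g s)‖ * ‖sol.w' s‖ ≤ ‖ι (g s)‖ * Real.sqrt (F s + ε ^ 2) :=
            mul_le_mul_of_nonneg_left hwle (norm_nonneg _)
          nlinarith
      have h0t := hφanti (self_mem_Ici) ht ht
      have hφ0 : φ 0 = ε := by
        simp [hφdef, hPdef, hF0, Real.sqrt_sq hε.le]
      rw [hφ0] at h0t
      simp only [hφdef] at h0t
      linarith
    have hu_le : ‖(sol.u t : V)‖ ≤ Real.sqrt (F t) := by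
      rw [show ‖(sol.u t : V)‖ = Real.sqrt (‖(sol.u t : V)‖ ^ 2) by
        rw [Real.sqrt_sq (norm_nonneg _)]]
      apply Real.sqrt_le_sqrt
      rw [hFval]; nlinarith [sq_nonneg ‖sol.w' t‖]
    apply le_of_forall_pos_le_add
    intro ε hε
    have h1 := main ε hε
    have h2 : Real.sqrt (F t) ≤ Real.sqrt (F t + ε ^ 2) :=
      Real.sqrt_le_sqrt (by nlinarith)
    calc ‖(sol.u t : V)‖ ≤ Real.sqrt (F t) := hu_le
      _ ≤ Real.sqrt (F t + ε ^ 2) := h2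
      _ ≤ ε + P t := h1
      _ = P t + ε := by ring
end

section
/- Suppose f = ι ∘ g with g : [0,∞) → V continuous, and let u be the strong solution of (ι∘u)'' = A u + ι g(t) with u(0) = 0, (ι∘u)'(0) = 0. Then for every t ≥ 0 the V-valued derivative satisfies ‖u̇(t)‖_V ≤ ∫₀^t ‖g(τ)‖_V dτ. -/
open Set MeasureTheory intervalIntegral
open scoped RealInnerProductSpace

set_option linter.unusedSectionVars false
namespace Stmt2Aux

variable {E : Type*} [NormedAddCommGroup E] [NormedSpace ℝ E]

lemma intInt {f : ℝ → E} (hf : ContinuousOn f (Ici 0)) {x y : ℝ}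
    (hx : 0 ≤ x) (hy : 0 ≤ y) : IntervalIntegrable f MeasureTheory.volume x y := by
  apply ContinuousOn.intervalIntegrable
  apply hf.mono
  intro r hr
  exact le_trans (le_min hx hy) hr.1

variable [CompleteSpace E]

lemma hasDerivWithinAt_primitive {f : ℝ → E} (hf : ContinuousOn f (Ici 0))
    {x : ℝ} (hx : 0 ≤ x) :
    HasDerivWithinAt (fun r => ∫ τ in (0:ℝ)..r, f τ) (f x) (Ici x) x := by
  have hsub : Ioi x ⊆ Ici 0 := fun r hr => le_trans hx (le_of_lt hr)
  refine integral_hasDerivWithinAt_right (intInt hf le_rfl hx)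
    ⟨Ici 0, ?_, hf.aestronglyMeasurable measurableSet_Ici⟩
    ((hf x hx).mono hsub)
  exact Filter.mem_of_superset self_mem_nhdsWithin hsub

lemma hasDerivAt_primitive {f : ℝ → E} (hf : ContinuousOn f (Ici 0))
    {x : ℝ} (hx : 0 < x) :
    HasDerivAt (fun r => ∫ τ in (0:ℝ)..r, f τ) (f x) x := by
  refine integral_hasDerivAt_right (intInt hf le_rfl hx.le)
    ⟨Ioi 0, Ioi_mem_nhds hx, (hf.mono Ioi_subset_Ici_self).aestronglyMeasurable measurableSet_Ioi⟩
    (hf.continuousAt (Ici_mem_nhds hx))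

lemma contOn_primitive {f : ℝ → E} (hf : ContinuousOn f (Ici 0)) {T : ℝ} (hT : 0 ≤ T) :
    ContinuousOn (fun r => ∫ τ in (0:ℝ)..r, f τ) (Icc 0 T) := by
  have h := continuousOn_primitive_interval (a := (0:ℝ)) (b := T) (μ := volume) (f := f) ?_
  · rwa [uIcc_of_le hT] at h
  · rw [uIcc_of_le hT]
    exact (hf.mono Icc_subset_Ici_self).integrableOn_compact isCompact_Icc

lemma eq_primitive {f F : ℝ → E} (hf : ContinuousOn f (Ici 0))
    (hF : ContinuousOn F (Ici 0)) (hF0 : F 0 = 0)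
    (hder : ∀ x ∈ Ici (0:ℝ), HasDerivWithinAt F (f x) (Ici 0) x) :
    ∀ r ∈ Ici (0:ℝ), F r = ∫ τ in (0:ℝ)..r, f τ := by
  intro r hr
  have key := constant_of_has_deriv_right_zero
    (f := fun x => F x - ∫ τ in (0:ℝ)..x, f τ) (a := 0) (b := r)
    ((hF.mono Icc_subset_Ici_self).sub (contOn_primitive hf hr))
    (fun x hx => by
      have h1 := (hder x hx.1).mono (Ici_subset_Ici.mpr hx.1)
      have h2 := hasDerivWithinAt_primitive hf hx.1
      have h3 := h1.sub h2; rw [sub_self] at h3; exact h3)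
    r ⟨hr, le_rfl⟩
  simp only [intervalIntegral.integral_same, hF0, sub_zero] at key
  exact sub_eq_zero.mp key

end Stmt2Aux

set_option maxHeartbeats 2000000 in
/-- For f = ι ∘ g with g continuous V-valued, the V-valued derivative of the strong
solution satisfies ‖u̇(t)‖_V ≤ ∫₀ᵗ ‖g(τ)‖_V dτ for all t ≥ 0. -/
theorem stmt2 {H V : Type*} [NormedAddCommGroup H] [InnerProductSpace ℝ H] [CompleteSpace H]
    [NormedAddCommGroup V] [InnerProductSpace ℝ V] [CompleteSpace V]
    (ι : V →L[ℝ] H) (hinj : Function.Injective ι) (hcomp : IsCompactOperator ι)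
    (hdense : DenseRange ι)
    (C_T : ℝ) (hCT : 0 < C_T) (hbd : ∀ v : V, ‖ι v‖ ≤ C_T * ‖v‖)
    (D : Submodule ℝ V) (A : D →ₗ[ℝ] H)
    (hGreen : ∀ (w : D) (v : V), (inner ℝ (A w) (ι v) : ℝ) + (inner ℝ ((w : V)) v : ℝ) = 0)
    (hSurj : ∀ h : H, ∃ w : D, ι ((w : V)) - A w = h)
    (g : ℝ → V) (hg : ContinuousOn g (Ici 0))
    (sol : StrongSol ι D A (fun t => ι (g t))) :
    ∀ t ∈ Ici (0:ℝ), ‖sol.u' t‖ ≤ ∫ τ in (0:ℝ)..t, ‖g τ‖ := by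
  intro t ht
  set uV : ℝ → V := fun s => ((sol.u s : V)) with huVdef
  set a : ℝ → H := fun s => A (sol.u s) with hadef
  have conta : ContinuousOn a (Ici 0) := sol.cont_Au
  have contu' : ContinuousOn sol.u' (Ici 0) := sol.cont_u'
  have contuV : ContinuousOn uV (Ici 0) := fun x hx => (sol.hasDeriv_u x hx).continuousWithinAt
  have contw' : ContinuousOn sol.w' (Ici 0) := fun x hx => (sol.hasDeriv_w' x hx).continuousWithinAt
  have hw'ι : ∀ τ ∈ Ici (0:ℝ), sol.w' τ = ι (sol.u' τ) := by
    intro τ hτ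
    have h2 : HasDerivWithinAt (fun s => ι (uV s)) (ι (sol.u' τ)) (Ici 0) τ := by
      exact ι.hasFDerivAt.comp_hasDerivWithinAt τ (sol.hasDeriv_u τ hτ)
    exact UniqueDiffWithinAt.eq_deriv _ (uniqueDiffOn_Ici 0 τ hτ) (sol.hasDeriv_w τ hτ) h2
  have hu'0 : sol.u' 0 = 0 := by
    apply hinj
    rw [← hw'ι 0 Set.self_mem_Ici, sol.init_w', map_zero]
  rcases eq_or_lt_of_le (mem_Ici.mp ht) with h0 | htpos
  · rw [← h0, intervalIntegral.integral_same, hu'0, norm_zero]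
  set Ia : ℝ → H := fun r => ∫ τ in (0:ℝ)..r, a τ with hIadef
  set Ig : ℝ → V := fun r => ∫ τ in (0:ℝ)..r, g τ with hIgdef
  set Iu : ℝ → V := fun r => ∫ τ in (0:ℝ)..r, sol.u' τ with hIudef
  have uVeq : ∀ r ∈ Ici (0:ℝ), uV r = Iu r :=
    Stmt2Aux.eq_primitive contu' contuV sol.init_u sol.hasDeriv_u
  have w'eq : ∀ r ∈ Ici (0:ℝ), sol.w' r = Ia r + ι (Ig r) := by
    intro r hr
    have h1 : ∀ x ∈ Ici (0:ℝ), HasDerivWithinAt sol.w' (a x + ι (g x)) (Ici 0) x := by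
      intro x hx
      have h := sol.hasDeriv_w' x hx
      rwa [sol.eqn x hx] at h
    have hcg : ContinuousOn (fun x => ι (g x)) (Ici 0) := ι.continuous.comp_continuousOn hg
    have h2 : ContinuousOn (fun x => a x + ι (g x)) (Ici 0) := conta.add hcg
    have h3 := Stmt2Aux.eq_primitive h2 contw' sol.init_w' h1 r hr
    rw [h3, intervalIntegral.integral_add (Stmt2Aux.intInt conta le_rfl hr)
      (Stmt2Aux.intInt hcg le_rfl hr)]
    congr 1
    exact ι.intervalIntegral_comp_comm (Stmt2Aux.intInt hg le_rfl hr)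
  -- main ε-estimate
  have main : ∀ ε > (0:ℝ), ‖sol.u' t‖ ≤ (∫ τ in (0:ℝ)..t, ‖g τ‖) + 3 * ε + ε * t := by
    intro ε hε
    -- moduli of continuity
    obtain ⟨δ₁, hδ₁pos, hδ₁⟩ : ∃ δ > (0:ℝ), ∀ x ∈ Icc (0:ℝ) (t+1), ∀ y ∈ Icc (0:ℝ) (t+1),
        dist x y < δ → dist (g x) (g y) < ε := by
      have huc := (isCompact_Icc (a := (0:ℝ)) (b := t+1)).uniformContinuousOn_of_continuous
        (hg.mono Icc_subset_Ici_self)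
      rw [Metric.uniformContinuousOn_iff] at huc
      exact huc ε hε
    have ha0 : a 0 = 0 := by
      have h0 : sol.u 0 = 0 := Subtype.coe_injective (by simpa using sol.init_u)
      simp [hadef, h0]
    obtain ⟨δ₂, hδ₂pos, hδ₂⟩ : ∃ δ > (0:ℝ), ∀ r ∈ Ici (0:ℝ), dist r 0 < δ → ‖a r‖ < ε := by
      have h := conta 0 Set.self_mem_Ici
      rw [Metric.continuousWithinAt_iff] at h
      obtain ⟨δ, hδ, hh⟩ := h ε hε
      refine ⟨δ, hδ, fun r hr hdr => ?_⟩
      have h2 := hh hr hdr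
      rwa [ha0, dist_zero_right] at h2
    obtain ⟨δ₃, hδ₃pos, hδ₃⟩ : ∃ δ > (0:ℝ), ∀ r ∈ Ici (0:ℝ), dist r 0 < δ → ‖sol.u' r‖ < ε := by
      have h := contu' 0 Set.self_mem_Ici
      rw [Metric.continuousWithinAt_iff] at h
      obtain ⟨δ, hδ, hh⟩ := h ε hε
      refine ⟨δ, hδ, fun r hr hdr => ?_⟩
      have h2 := hh hr hdr
      rwa [hu'0, dist_zero_right] at h2
    obtain ⟨δ₄, hδ₄pos, hδ₄⟩ : ∃ δ > (0:ℝ), ∀ r ∈ Ici (0:ℝ), dist r t < δ →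
        ‖sol.u' r - sol.u' t‖ < ε := by
      have h := contu' t ht
      rw [Metric.continuousWithinAt_iff] at h
      obtain ⟨δ, hδ, hh⟩ := h ε hε
      refine ⟨δ, hδ, fun r hr hdr => ?_⟩
      have h2 := hh hr hdr
      rwa [dist_eq_norm] at h2
    -- the time step d
    have hk1 : min 1 (min (min δ₁ δ₂) (min δ₃ δ₄)) ≤ 1 := min_le_left _ _
    have hkδ₁ : min 1 (min (min δ₁ δ₂) (min δ₃ δ₄)) ≤ δ₁ :=
      le_trans (min_le_right _ _) (le_trans (min_le_left _ _) (min_le_left _ _))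
    have hkδ₂ : min 1 (min (min δ₁ δ₂) (min δ₃ δ₄)) ≤ δ₂ :=
      le_trans (min_le_right _ _) (le_trans (min_le_left _ _) (min_le_right _ _))
    have hkδ₃ : min 1 (min (min δ₁ δ₂) (min δ₃ δ₄)) ≤ δ₃ :=
      le_trans (min_le_right _ _) (le_trans (min_le_right _ _) (min_le_left _ _))
    have hkδ₄ : min 1 (min (min δ₁ δ₂) (min δ₃ δ₄)) ≤ δ₄ :=
      le_trans (min_le_right _ _) (le_trans (min_le_right _ _) (min_le_right _ _))
    have hk0 : 0 < min 1 (min (min δ₁ δ₂) (min δ₃ δ₄)) :=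
      lt_min one_pos (lt_min (lt_min hδ₁pos hδ₂pos) (lt_min hδ₃pos hδ₄pos))
    set d : ℝ := min 1 (min (min δ₁ δ₂) (min δ₃ δ₄)) / 2 with hddef
    have hd0 : 0 < d := by rw [hddef]; exact half_pos hk0
    have hd1 : d ≤ 1 := by rw [hddef]; linarith
    have hdδ₁ : d < δ₁ := by rw [hddef]; linarith
    have hdδ₂ : d < δ₂ := by rw [hddef]; linarith
    have hdδ₃ : d < δ₃ := by rw [hddef]; linarith
    have hdδ₄ : d < δ₄ := by rw [hddef]; linarith
    -- the difference-quotient solution and averaged quantities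
    set vV : ℝ → V := fun s => d⁻¹ • (uV (s + d) - uV s) with hvVdef
    set vD : ℝ → D := fun s => d⁻¹ • (sol.u (s + d) - sol.u s) with hvDdef
    have hvDV : ∀ s, ((vD s : V)) = vV s := fun s => by simp [hvDdef, hvVdef, huVdef]
    set v' : ℝ → V := fun s => d⁻¹ • (sol.u' (s + d) - sol.u' s) with hv'def
    set af : ℝ → H := fun s => d⁻¹ • (Ia (s + d) - Ia s) with hafdef
    set gf : ℝ → V := fun s => d⁻¹ • (Ig (s + d) - Ig s) with hgfdef
    set Ef : ℝ → ℝ := fun s => ⟪vV s, vV s⟫ + ⟪af s, af s⟫ with hEfdef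
    set ψ : ℝ → ℝ := fun s => Real.sqrt (Ef s + ε ^ 2) with hψdef
    set P : ℝ → ℝ := fun s => ∫ r in (0:ℝ)..s, (‖g r‖ + ε) with hPdef
    have hX : ∀ s, 0 < Ef s + ε ^ 2 := fun s =>
      add_pos_of_nonneg_of_pos (add_nonneg real_inner_self_nonneg real_inner_self_nonneg)
        (by positivity)
    -- derivatives
    have hDuV : ∀ x, 0 < x → HasDerivAt uV (sol.u' x) x := fun x hx =>
      (sol.hasDeriv_u x hx.le).hasDerivAt (Ici_mem_nhds hx)
    have hvV_deriv : ∀ s, 0 < s → HasDerivAt vV (v' s) s := by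
      intro s hs
      have h2 : HasDerivAt (fun x => uV (x + d)) (sol.u' (s + d)) s := by
        have shift : HasDerivAt (fun x : ℝ => x + d) 1 s := (hasDerivAt_id s).add_const d
        have h := (hDuV (s + d) (by positivity)).scomp s shift; rw [one_smul] at h; exact h
      exact (h2.sub (hDuV s hs)).const_smul d⁻¹
    have hIa_at : ∀ x, 0 < x → HasDerivAt Ia (a x) x := fun x hx =>
      Stmt2Aux.hasDerivAt_primitive conta hx
    have haf_deriv : ∀ s, 0 < s → HasDerivAt af (d⁻¹ • (a (s + d) - a s)) s := by
      intro s hs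
      have h2 : HasDerivAt (fun x => Ia (x + d)) (a (s + d)) s := by
        have shift : HasDerivAt (fun x : ℝ => x + d) 1 s := (hasDerivAt_id s).add_const d
        have h := (hIa_at (s + d) (by positivity)).scomp s shift; rw [one_smul] at h; exact h
      exact (h2.sub (hIa_at s hs)).const_smul d⁻¹
    have hP_deriv : ∀ s, 0 < s → HasDerivAt P (‖g s‖ + ε) s := fun s hs =>
      Stmt2Aux.hasDerivAt_primitive (hg.norm.add continuousOn_const) hs
    -- the key identity  ι (v' s) = af s + ι (gf s)
    have hι : ∀ s, 0 ≤ s → ι (v' s) = af s + ι (gf s) := by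
      intro s hs
      have hsd : (0:ℝ) ≤ s + d := by positivity
      have e1 : ι (v' s) = d⁻¹ • (sol.w' (s + d) - sol.w' s) := by
        rw [hw'ι (s + d) hsd, hw'ι s hs]
        simp [hv'def, _root_.map_smul, map_sub]
      rw [e1, w'eq (s + d) hsd, w'eq s hs]
      simp only [hafdef, hgfdef, _root_.map_smul, map_sub, smul_sub, smul_add]
      abel
    -- bound on the averaged g
    have hIg_sub : ∀ s, 0 ≤ s → Ig (s + d) - Ig s = ∫ τ in s..(s + d), g τ := fun s hs =>
      intervalIntegral.integral_interval_sub_left (Stmt2Aux.intInt hg le_rfl (by positivity))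
        (Stmt2Aux.intInt hg le_rfl hs)
    have hgf_bound : ∀ s ∈ Icc (0:ℝ) t, ‖gf s‖ ≤ ‖g s‖ + ε := by
      intro s hs
      have hs0 := hs.1
      have key : ‖gf s - g s‖ ≤ ε := by
        have e2 : gf s - g s = d⁻¹ • (∫ τ in s..(s + d), (g τ - g s)) := by
          rw [intervalIntegral.integral_sub (Stmt2Aux.intInt hg hs0 (by positivity))
            intervalIntegrable_const, intervalIntegral.integral_const, add_sub_cancel_left,
            smul_sub, smul_smul, inv_mul_cancel₀ (ne_of_gt hd0), one_smul, ← hIg_sub s hs0]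
        have hb : ‖∫ τ in s..(s + d), (g τ - g s)‖ ≤ ε * |(s + d) - s| := by
          apply intervalIntegral.norm_integral_le_of_norm_le_const
          intro r hr
          rw [Set.uIoc_of_le (by linarith : s ≤ s + d)] at hr
          have hrIcc : r ∈ Icc (0:ℝ) (t+1) := ⟨by linarith [hr.1], by linarith [hr.2, hs.2]⟩
          have hsIcc : s ∈ Icc (0:ℝ) (t+1) := ⟨hs0, by linarith [hs.2]⟩
          have hdist : dist r s < δ₁ := by
            rw [Real.dist_eq, abs_of_nonneg (by linarith [hr.1.le] : (0:ℝ) ≤ r - s)]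
            linarith [hr.2]
          have h3 := hδ₁ r hrIcc s hsIcc hdist
          rw [dist_eq_norm] at h3
          exact h3.le
        have heq : |(s + d) - s| = d := by rw [add_sub_cancel_left, abs_of_pos hd0]
        rw [heq] at hb
        rw [e2, norm_smul, norm_inv, Real.norm_eq_abs, abs_of_pos hd0]
        have h4 := mul_le_mul_of_nonneg_left hb (inv_nonneg.mpr hd0.le)
        have heq2 : d⁻¹ * (ε * d) = ε := by field_simp
        linarith
      have htri : ‖gf s‖ ≤ ‖g s‖ + ‖gf s - g s‖ := by
        have h5 := norm_add_le (g s) (gf s - g s)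
        simpa using h5
      linarith
    -- energy derivative via the Green identity
    have hE_deriv : ∀ s, 0 < s → HasDerivAt Ef (2 * ⟪vV s, gf s⟫) s := by
      intro s hs
      have h1 := HasDerivAt.inner (𝕜 := ℝ) (hvV_deriv s hs) (hvV_deriv s hs)
      have h2 := HasDerivAt.inner (𝕜 := ℝ) (haf_deriv s hs) (haf_deriv s hs)
      have hsum := h1.add h2
      have hAv : A (vD s) = d⁻¹ • (a (s + d) - a s) := by
        simp [hvDdef, hadef, _root_.map_smul, map_sub]
      have G1 := hGreen (vD s) (v' s)
      have G2 := hGreen (vD s) (gf s)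
      rw [hvDV] at G1 G2
      have hsplit : (inner ℝ (A (vD s)) (ι (v' s)) : ℝ)
          = inner ℝ (A (vD s)) (af s) + inner ℝ (A (vD s)) (ι (gf s)) := by
        rw [hι s hs.le, inner_add_right]
      have hval : ⟪vV s, v' s⟫ + ⟪v' s, vV s⟫
          + (⟪af s, d⁻¹ • (a (s + d) - a s)⟫ + ⟪d⁻¹ • (a (s + d) - a s), af s⟫)
          = 2 * ⟪vV s, gf s⟫ := by
        rw [← hAv]
        have c1 : ⟪v' s, vV s⟫ = ⟪vV s, v' s⟫ := real_inner_comm _ _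
        have c2 : ⟪af s, A (vD s)⟫ = ⟪A (vD s), af s⟫ := real_inner_comm _ _
        rw [c1, c2]
        linarith [G1, G2, hsplit]
      rw [hval] at hsum
      exact hsum
    -- derivative of ψ and its bound
    have hψ_deriv : ∀ s, 0 < s →
        HasDerivAt ψ (1 / (2 * Real.sqrt (Ef s + ε ^ 2)) * (2 * ⟪vV s, gf s⟫)) s := by
      intro s hs
      have h1 : HasDerivAt (fun x => Ef x + ε ^ 2) (2 * ⟪vV s, gf s⟫) s :=
        (hE_deriv s hs).add_const _
      have h2 := (Real.hasDerivAt_sqrt (ne_of_gt (hX s))).comp s h1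
      exact h2
    have hψ_bound : ∀ s, 0 < s → s < t →
        1 / (2 * Real.sqrt (Ef s + ε ^ 2)) * (2 * ⟪vV s, gf s⟫) ≤ ‖g s‖ + ε := by
      intro s hs hst
      have hsq : 0 < Real.sqrt (Ef s + ε ^ 2) := Real.sqrt_pos.mpr (hX s)
      have hv : ‖vV s‖ ≤ Real.sqrt (Ef s + ε ^ 2) := by
        rw [← Real.sqrt_sq (norm_nonneg (vV s))]
        apply Real.sqrt_le_sqrt
        have e1 : ⟪vV s, vV s⟫ = ‖vV s‖ ^ 2 := real_inner_self_eq_norm_sq _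
        have e2 : (0:ℝ) ≤ ⟪af s, af s⟫ := real_inner_self_nonneg
        have e3 : Ef s = ⟪vV s, vV s⟫ + ⟪af s, af s⟫ := rfl
        nlinarith [sq_nonneg ε]
      have hi : ⟪vV s, gf s⟫ ≤ ‖vV s‖ * ‖gf s‖ := real_inner_le_norm _ _
      have hgfs := hgf_bound s ⟨hs.le, hst.le⟩
      have h2 : ⟪vV s, gf s⟫ ≤ Real.sqrt (Ef s + ε ^ 2) * (‖g s‖ + ε) :=
        le_trans hi (mul_le_mul hv hgfs (norm_nonneg _) hsq.le)
      have heq : 1 / (2 * Real.sqrt (Ef s + ε ^ 2)) * (2 * ⟪vV s, gf s⟫)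
          = ⟪vV s, gf s⟫ / Real.sqrt (Ef s + ε ^ 2) := by
        field_simp
      rw [heq, div_le_iff₀ hsq]
      have hc := mul_comm (Real.sqrt (Ef s + ε ^ 2)) (‖g s‖ + ε)
      linarith
    -- continuity on [0,t]
    have contIa : ContinuousOn Ia (Icc 0 (t+1)) := Stmt2Aux.contOn_primitive conta (by linarith)
    have contshift : Continuous (fun x : ℝ => x + d) := continuous_id.add continuous_const
    have contvV : ContinuousOn vV (Icc 0 t) := by
      have c1 : ContinuousOn (fun s => uV (s + d)) (Icc 0 t) :=
        contuV.comp contshift.continuousOn (fun x hx => by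
          simp only [mem_Ici]; linarith [hx.1, hd0.le])
      exact (c1.sub (contuV.mono Icc_subset_Ici_self)).const_smul d⁻¹
    have contaf : ContinuousOn af (Icc 0 t) := by
      have c1 : ContinuousOn (fun s => Ia (s + d)) (Icc 0 t) :=
        contIa.comp contshift.continuousOn (fun x hx =>
          ⟨by linarith [hx.1, hd0.le], by linarith [hx.2, hd1]⟩)
      exact (c1.sub (contIa.mono (fun x hx => ⟨hx.1, by linarith [hx.2]⟩))).const_smul d⁻¹
    have contEf : ContinuousOn Ef (Icc 0 t) := (contvV.inner contvV).add (contaf.inner contaf)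
    have contψ : ContinuousOn ψ (Icc 0 t) :=
      Real.continuous_sqrt.comp_continuousOn (contEf.add continuousOn_const)
    have contP : ContinuousOn P (Icc 0 t) :=
      Stmt2Aux.contOn_primitive (hg.norm.add continuousOn_const) ht
    -- monotonicity (Gronwall)
    have mono : MonotoneOn (fun s => P s - ψ s) (Icc 0 t) := by
      apply monotoneOn_of_deriv_nonneg (convex_Icc 0 t) (contP.sub contψ)
      · intro x hx
        rw [interior_Icc] at hx
        exact ((hP_deriv x hx.1).sub (hψ_deriv x hx.1)).differentiableAt.differentiableWithinAt
      · intro x hx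
        rw [interior_Icc] at hx
        rw [((hP_deriv x hx.1).sub (hψ_deriv x hx.1)).deriv]
        have hb := hψ_bound x hx.1 hx.2
        linarith
    -- initial smallness
    have hIu_sub : ∀ s, 0 ≤ s → Iu (s + d) - Iu s = ∫ τ in s..(s + d), sol.u' τ := fun s hs =>
      intervalIntegral.integral_interval_sub_left (Stmt2Aux.intInt contu' le_rfl (by positivity))
        (Stmt2Aux.intInt contu' le_rfl hs)
    have hvV_int : ∀ s, 0 ≤ s → vV s = d⁻¹ • ∫ τ in s..(s + d), sol.u' τ := by
      intro s hs
      show d⁻¹ • (uV (s + d) - uV s) = _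
      rw [uVeq (s + d) (by positivity : (0:ℝ) ≤ s + d), uVeq s hs, hIu_sub s hs]
    have hvV0 : ‖vV 0‖ ≤ ε := by
      rw [hvV_int 0 le_rfl, norm_smul, norm_inv, Real.norm_eq_abs, abs_of_pos hd0]
      have hb : ‖∫ τ in (0:ℝ)..(0 + d), sol.u' τ‖ ≤ ε * |(0 + d) - 0| := by
        apply intervalIntegral.norm_integral_le_of_norm_le_const
        intro r hr
        rw [Set.uIoc_of_le (by linarith : (0:ℝ) ≤ 0 + d)] at hr
        refine (hδ₃ r hr.1.le ?_).le
        rw [Real.dist_eq, sub_zero, abs_of_pos hr.1]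
        linarith [hr.2]
      have heq : |(0 + d) - 0| = d := by rw [sub_zero, zero_add, abs_of_pos hd0]
      rw [heq] at hb
      have h4 := mul_le_mul_of_nonneg_left hb (inv_nonneg.mpr hd0.le)
      have heq2 : d⁻¹ * (ε * d) = ε := by field_simp
      linarith
    have hIa_sub : ∀ s, 0 ≤ s → Ia (s + d) - Ia s = ∫ τ in s..(s + d), a τ := fun s hs =>
      intervalIntegral.integral_interval_sub_left (Stmt2Aux.intInt conta le_rfl (by positivity))
        (Stmt2Aux.intInt conta le_rfl hs)
    have haf0 : ‖af 0‖ ≤ ε := by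
      have e0 : af 0 = d⁻¹ • ∫ τ in (0:ℝ)..(0 + d), a τ := by
        show d⁻¹ • (Ia (0 + d) - Ia 0) = _
        rw [hIa_sub 0 le_rfl]
      rw [e0, norm_smul, norm_inv, Real.norm_eq_abs, abs_of_pos hd0]
      have hb : ‖∫ τ in (0:ℝ)..(0 + d), a τ‖ ≤ ε * |(0 + d) - 0| := by
        apply intervalIntegral.norm_integral_le_of_norm_le_const
        intro r hr
        rw [Set.uIoc_of_le (by linarith : (0:ℝ) ≤ 0 + d)] at hr
        refine (hδ₂ r hr.1.le ?_).le
        rw [Real.dist_eq, sub_zero, abs_of_pos hr.1]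
        linarith [hr.2]
      have heq : |(0 + d) - 0| = d := by rw [sub_zero, zero_add, abs_of_pos hd0]
      rw [heq] at hb
      have h4 := mul_le_mul_of_nonneg_left hb (inv_nonneg.mpr hd0.le)
      have heq2 : d⁻¹ * (ε * d) = ε := by field_simp
      linarith
    have hψ0 : ψ 0 ≤ 2 * ε := by
      have e1 : ⟪vV 0, vV 0⟫ = ‖vV 0‖ ^ 2 := real_inner_self_eq_norm_sq _
      have e2 : ⟪af 0, af 0⟫ = ‖af 0‖ ^ 2 := real_inner_self_eq_norm_sq _
      have e3 : Ef 0 = ⟪vV 0, vV 0⟫ + ⟪af 0, af 0⟫ := rfl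
      have hle : Ef 0 + ε ^ 2 ≤ (2 * ε) ^ 2 := by
        nlinarith [norm_nonneg (vV 0), norm_nonneg (af 0), hvV0, haf0, hε.le]
      calc ψ 0 = Real.sqrt (Ef 0 + ε ^ 2) := rfl
        _ ≤ Real.sqrt ((2 * ε) ^ 2) := Real.sqrt_le_sqrt hle
        _ = 2 * ε := Real.sqrt_sq (by positivity)
    -- closeness at t
    have hvVt : ‖vV t - sol.u' t‖ ≤ ε := by
      have e2 : vV t - sol.u' t = d⁻¹ • (∫ τ in t..(t + d), (sol.u' τ - sol.u' t)) := by
        rw [intervalIntegral.integral_sub (Stmt2Aux.intInt contu' ht (by positivity))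
          intervalIntegrable_const, intervalIntegral.integral_const, add_sub_cancel_left,
          smul_sub, smul_smul, inv_mul_cancel₀ (ne_of_gt hd0), one_smul, hvV_int t ht]
      rw [e2, norm_smul, norm_inv, Real.norm_eq_abs, abs_of_pos hd0]
      have hb : ‖∫ τ in t..(t + d), (sol.u' τ - sol.u' t)‖ ≤ ε * |(t + d) - t| := by
        apply intervalIntegral.norm_integral_le_of_norm_le_const
        intro r hr
        rw [Set.uIoc_of_le (by linarith : t ≤ t + d)] at hr
        refine (hδ₄ r (le_trans (mem_Ici.mp ht) hr.1.le) ?_).le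
        rw [Real.dist_eq, abs_of_nonneg (by linarith [hr.1.le] : (0:ℝ) ≤ r - t)]
        linarith [hr.2]
      have heq : |(t + d) - t| = d := by rw [add_sub_cancel_left, abs_of_pos hd0]
      rw [heq] at hb
      have h4 := mul_le_mul_of_nonneg_left hb (inv_nonneg.mpr hd0.le)
      have heq2 : d⁻¹ * (ε * d) = ε := by field_simp
      linarith
    have hvVt2 : ‖vV t‖ ≤ ψ t := by
      have e1 : ⟪vV t, vV t⟫ = ‖vV t‖ ^ 2 := real_inner_self_eq_norm_sq _
      have e2 : (0:ℝ) ≤ ⟪af t, af t⟫ := real_inner_self_nonneg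
      have e3 : Ef t = ⟪vV t, vV t⟫ + ⟪af t, af t⟫ := rfl
      calc ‖vV t‖ = Real.sqrt (‖vV t‖ ^ 2) := (Real.sqrt_sq (norm_nonneg _)).symm
        _ ≤ Real.sqrt (Ef t + ε ^ 2) := Real.sqrt_le_sqrt (by nlinarith [sq_nonneg ε])
        _ = ψ t := rfl
    have hPt : P t = (∫ τ in (0:ℝ)..t, ‖g τ‖) + ε * t := by
      show (∫ r in (0:ℝ)..t, (‖g r‖ + ε)) = _
      rw [intervalIntegral.integral_add (Stmt2Aux.intInt hg.norm le_rfl ht)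
        intervalIntegrable_const, intervalIntegral.integral_const]
      simp only [smul_eq_mul, sub_zero]
      ring
    have hmono : P 0 - ψ 0 ≤ P t - ψ t := mono (left_mem_Icc.mpr ht) (right_mem_Icc.mpr ht) ht
    have hP0 : P 0 = 0 := intervalIntegral.integral_same
    have htri : ‖sol.u' t‖ ≤ ‖vV t‖ + ε := by
      have h1 := norm_add_le (vV t) (sol.u' t - vV t)
      have h3 : vV t + (sol.u' t - vV t) = sol.u' t := by abel
      rw [h3] at h1
      have h2 : ‖sol.u' t - vV t‖ = ‖vV t - sol.u' t‖ := norm_sub_rev _ _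
      linarith
    linarith [htri, hvVt2, hmono, hψ0, hPt, hP0]
  refine le_of_forall_pos_le_add fun ε' hε' => ?_
  have h3t : (0:ℝ) < 3 + t := by linarith
  have hm := main (ε' / (3 + t)) (by positivity)
  have : 3 * (ε' / (3 + t)) + ε' / (3 + t) * t = ε' := by field_simp
  linarith
end

section
/- Suppose f = ι ∘ g with g : [0,∞) → V continuous, and let u be the strong solution of (ι∘u)'' = A u + ι g(t) with u(0) = 0, (ι∘u)'(0) = 0. Then for every t ≥ 0 one has ‖(ι∘u)'(t)‖_H ≤ ∫₀^t ‖ι g(τ)‖_H dτ. -/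
open Set

/-- For f = ι ∘ g with g continuous V-valued, the strong solution satisfies
‖(ι∘u)'(t)‖_H ≤ ∫₀ᵗ ‖ι g(τ)‖_H dτ for all t ≥ 0. -/
theorem stmt3 {H V : Type*} [NormedAddCommGroup H] [InnerProductSpace ℝ H] [CompleteSpace H]
    [NormedAddCommGroup V] [InnerProductSpace ℝ V] [CompleteSpace V]
    (ι : V →L[ℝ] H) (hinj : Function.Injective ι) (hcomp : IsCompactOperator ι)
    (hdense : DenseRange ι)
    (C_T : ℝ) (hCT : 0 < C_T) (hbd : ∀ v : V, ‖ι v‖ ≤ C_T * ‖v‖)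
    (D : Submodule ℝ V) (A : D →ₗ[ℝ] H)
    (hGreen : ∀ (w : D) (v : V), (inner ℝ (A w) (ι v) : ℝ) + (inner ℝ ((w : V)) v : ℝ) = 0)
    (hSurj : ∀ h : H, ∃ w : D, ι ((w : V)) - A w = h)
    (g : ℝ → V) (hg : ContinuousOn g (Ici 0))
    (sol : StrongSol ι D A (fun t => ι (g t))) :
    ∀ t ∈ Ici (0:ℝ), ‖sol.w' t‖ ≤ ∫ τ in (0:ℝ)..t, ‖ι (g τ)‖ := by
  have huniq : UniqueDiffOn ℝ (Ici (0:ℝ)) := uniqueDiffOn_Ici 0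
  -- the H-valued derivative of ι∘u is ι applied to the V-valued derivative
  have hw'eq : ∀ s ∈ Ici (0:ℝ), sol.w' s = ι (sol.u' s) := by
    intro s hs
    have h1 : HasDerivWithinAt (fun r => ι ((sol.u r : V))) (ι (sol.u' s)) (Ici 0) s :=
      (ι.hasFDerivAt).comp_hasDerivWithinAt s (sol.hasDeriv_u s hs)
    rw [← (sol.hasDeriv_w s hs).derivWithin (huniq s hs), h1.derivWithin (huniq s hs)]
  -- the energy
  set q : ℝ → ℝ := fun s =>
    (inner ℝ (sol.w' s) (sol.w' s) : ℝ) + (inner ℝ ((sol.u s : V)) ((sol.u s : V)) : ℝ) with hq_def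
  have hqnonneg : ∀ s, 0 ≤ q s := fun s =>
    add_nonneg real_inner_self_nonneg real_inner_self_nonneg
  have hq : ∀ s ∈ Ici (0:ℝ),
      HasDerivWithinAt q (2 * (inner ℝ (ι (g s)) (sol.w' s) : ℝ)) (Ici 0) s := by
    intro s hs
    have h1 := (sol.hasDeriv_w' s hs).inner ℝ (sol.hasDeriv_w' s hs)
    have h2 := (sol.hasDeriv_u s hs).inner ℝ (sol.hasDeriv_u s hs)
    have h := h1.add h2
    refine h.congr_deriv ?_
    have heq := sol.eqn s hs
    have hG := hGreen (sol.u s) (sol.u' s)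
    have hw := hw'eq s hs
    have e1 : (inner ℝ (sol.w'' s) (sol.w' s) : ℝ)
        = (inner ℝ (A (sol.u s)) (ι (sol.u' s)) : ℝ) + (inner ℝ (ι (g s)) (sol.w' s) : ℝ) := by
      rw [heq, inner_add_left]
      rw [hw]
    have c1 := real_inner_comm (sol.w' s) (sol.w'' s)
    have c2 := real_inner_comm ((sol.u s : V)) (sol.u' s)
    linarith
  -- continuity facts about the forcing term
  have hgc : ContinuousOn (fun τ => ‖ι (g τ)‖) (Ici 0) :=
    (ι.continuous.comp_continuousOn hg).norm
  have hmeasA : MeasureTheory.AEStronglyMeasurable (fun τ => ‖ι (g τ)‖)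
      (MeasureTheory.volume.restrict (Ici 0)) :=
    hgc.aestronglyMeasurable measurableSet_Ici
  have hInt : ∀ s ∈ Ici (0:ℝ),
      IntervalIntegrable (fun τ => ‖ι (g τ)‖) MeasureTheory.volume 0 s := by
    intro s hs
    apply (hgc.mono _).intervalIntegrable
    rw [uIcc_of_le hs]
    exact Icc_subset_Ici_self
  -- the primitive of the forcing norm
  have hprim : ∀ s ∈ Ici (0:ℝ),
      HasDerivWithinAt (fun x => ∫ τ in (0:ℝ)..x, ‖ι (g τ)‖) ‖ι (g s)‖ (Ici 0) s := by
    intro s hs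
    rcases eq_or_lt_of_le (mem_Ici.mp hs) with h0 | hpos
    · have h0' : s = 0 := h0.symm
      subst h0'
      exact intervalIntegral.integral_hasDerivWithinAt_right (t := Ioi (0:ℝ))
        (hInt 0 self_mem_Ici)
        ⟨Ici 0, Filter.mem_of_superset self_mem_nhdsWithin Ioi_subset_Ici_self, hmeasA⟩
        ((hgc 0 self_mem_Ici).mono Ioi_subset_Ici_self)
    · have hmem : Ici (0:ℝ) ∈ nhds s := Ici_mem_nhds hpos
      exact (intervalIntegral.integral_hasDerivAt_right (hInt s hs)
        ⟨Ici 0, hmem, hmeasA⟩ ((hgc s hs).continuousAt hmem)).hasDerivWithinAt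
  intro t ht
  refine le_of_forall_pos_le_add ?_
  intro δ hδ
  -- the regularized energy norm
  set r : ℝ → ℝ := fun s => Real.sqrt (q s + δ ^ 2) with hr_def
  have hpos : ∀ s, 0 < q s + δ ^ 2 := fun s => add_pos_of_nonneg_of_pos (hqnonneg s) (by positivity)
  have hrpos : ∀ s, 0 < r s := fun s => Real.sqrt_pos.2 (hpos s)
  have hr : ∀ s ∈ Ici (0:ℝ),
      HasDerivWithinAt r
        (1 / (2 * Real.sqrt (q s + δ ^ 2)) * (2 * (inner ℝ (ι (g s)) (sol.w' s) : ℝ)))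
        (Ici 0) s := by
    intro s hs
    exact (Real.hasDerivAt_sqrt (ne_of_gt (hpos s))).comp_hasDerivWithinAt s
      ((hq s hs).add_const _)
  have hwle : ∀ s, ‖sol.w' s‖ ≤ r s := by
    intro s
    rw [hr_def]
    rw [Real.le_sqrt (norm_nonneg _) (hpos s).le]
    have : (inner ℝ (sol.w' s) (sol.w' s) : ℝ) = ‖sol.w' s‖ ^ 2 := real_inner_self_eq_norm_sq _
    have h2 : (0:ℝ) ≤ (inner ℝ ((sol.u s : V)) ((sol.u s : V)) : ℝ) := real_inner_self_nonneg
    simp only [hq_def]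
    nlinarith
  have hbound : ∀ s ∈ Ici (0:ℝ),
      1 / (2 * Real.sqrt (q s + δ ^ 2)) * (2 * (inner ℝ (ι (g s)) (sol.w' s) : ℝ))
        ≤ ‖ι (g s)‖ := by
    intro s hs
    have hS : (0:ℝ) < Real.sqrt (q s + δ ^ 2) := hrpos s
    have h1 : (inner ℝ (ι (g s)) (sol.w' s) : ℝ) ≤ ‖ι (g s)‖ * ‖sol.w' s‖ :=
      real_inner_le_norm _ _
    have h2 : ‖sol.w' s‖ ≤ Real.sqrt (q s + δ ^ 2) := hwle s
    have h3 : (inner ℝ (ι (g s)) (sol.w' s) : ℝ) ≤ ‖ι (g s)‖ * Real.sqrt (q s + δ ^ 2) := by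
      calc (inner ℝ (ι (g s)) (sol.w' s) : ℝ) ≤ ‖ι (g s)‖ * ‖sol.w' s‖ := h1
        _ ≤ ‖ι (g s)‖ * Real.sqrt (q s + δ ^ 2) :=
          mul_le_mul_of_nonneg_left h2 (norm_nonneg _)
    have heq : 1 / (2 * Real.sqrt (q s + δ ^ 2)) * (2 * (inner ℝ (ι (g s)) (sol.w' s) : ℝ))
        = (inner ℝ (ι (g s)) (sol.w' s) : ℝ) / Real.sqrt (q s + δ ^ 2) := by
      field_simp
    rw [heq, div_le_iff₀ hS]
    exact h3
  -- F is monotone on [0, ∞)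
  set F : ℝ → ℝ := fun s => (∫ τ in (0:ℝ)..s, ‖ι (g τ)‖) - r s with hF_def
  have hF : ∀ s ∈ Ici (0:ℝ),
      HasDerivWithinAt F
        (‖ι (g s)‖ - 1 / (2 * Real.sqrt (q s + δ ^ 2)) * (2 * (inner ℝ (ι (g s)) (sol.w' s) : ℝ)))
        (Ici 0) s := fun s hs => (hprim s hs).sub (hr s hs)
  have hmono : MonotoneOn F (Ici 0) := by
    apply monotoneOn_of_deriv_nonneg (convex_Ici 0)
    · exact fun s hs => (hF s hs).continuousWithinAt
    · intro s hs
      rw [interior_Ici] at hs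
      exact (((hF s (mem_Ici.mpr (le_of_lt (mem_Ioi.mp hs)))).hasDerivAt
        (Ici_mem_nhds hs)).differentiableAt).differentiableWithinAt
    · intro s hs
      rw [interior_Ici] at hs
      rw [((hF s (mem_Ici.mpr (le_of_lt (mem_Ioi.mp hs)))).hasDerivAt (Ici_mem_nhds hs)).deriv]
      have := hbound s (mem_Ici.mpr (le_of_lt (mem_Ioi.mp hs)))
      linarith
  have hF0 : F 0 = -δ := by
    have hq0 : q 0 = 0 := by
      simp [hq_def, sol.init_w', sol.init_u]
    simp [hF_def, hr_def, hq0, Real.sqrt_sq hδ.le]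
  have hFt : F 0 ≤ F t := hmono (self_mem_Ici) ht ht
  have : r t ≤ (∫ τ in (0:ℝ)..t, ‖ι (g τ)‖) + δ := by
    rw [hF0] at hFt
    simp only [hF_def] at hFt
    linarith
  exact le_trans (hwle t) this
end

section
/- Suppose f = ι ∘ g with g : [0,∞) → V continuous, and let u be the strong solution of (ι∘u)'' = A u + ι g(t) with u(0) = 0, (ι∘u)'(0) = 0. Then for every t ≥ 0 one has ‖A u(t)‖_H ≤ ∫₀^t ‖g(τ)‖_V dτ. -/
open Set intervalIntegral

noncomputable def stek {E : Type*} [NormedAddCommGroup E] [NormedSpace ℝ E]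
    (h : ℝ) (f : ℝ → E) (t : ℝ) : E := h⁻¹ • ∫ s in t..(t+h), f s

section steklemmas
set_option linter.unusedSectionVars false
variable {E F : Type*} [NormedAddCommGroup E] [NormedSpace ℝ E] [CompleteSpace E]
  [NormedAddCommGroup F] [NormedSpace ℝ F] [CompleteSpace F]
  {f f₂ : ℝ → E} {h t : ℝ}

theorem stek_hasDerivAt (hf : Continuous f) (h t : ℝ) :
    HasDerivAt (stek h f) (h⁻¹ • (f (t+h) - f t)) t := by
  have hprim : ∀ b : ℝ, HasDerivAt (fun τ => ∫ s in (0:ℝ)..τ, f s) (f b) b := fun b =>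
    integral_hasDerivAt_right (hf.intervalIntegrable _ _)
      (hf.aestronglyMeasurable.stronglyMeasurableAtFilter) hf.continuousAt
  have heq : stek h f = fun τ => h⁻¹ • ((∫ s in (0:ℝ)..(τ+h), f s) - ∫ s in (0:ℝ)..τ, f s) := by
    funext τ
    rw [integral_interval_sub_left (hf.intervalIntegrable _ _) (hf.intervalIntegrable _ _)]
    rfl
  rw [heq]
  have h1 : HasDerivAt (fun τ : ℝ => ∫ s in (0:ℝ)..(τ+h), f s) (f (t+h)) t := by
    have := (hprim (t+h)).scomp t ((hasDerivAt_id t).add_const h)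
    simpa [Function.comp_def] using this
  exact ((h1.sub (hprim t)).const_smul h⁻¹ : _)

theorem stek_continuous (hf : Continuous f) : Continuous (stek h f) :=
  continuous_iff_continuousAt.2 fun t => (stek_hasDerivAt hf h t).continuousAt

theorem stek_congr (hfg : ∀ s ∈ Ici (0:ℝ), f s = f₂ s) (hh : 0 ≤ h) (ht : 0 ≤ t) :
    stek h f t = stek h f₂ t := by
  unfold stek
  congr 1
  refine integral_congr fun s hs => ?_
  rw [uIcc_of_le (by linarith)] at hs
  exact hfg s (mem_Ici.2 (by linarith [hs.1]))

theorem stek_add (hf : Continuous f) (hf₂ : Continuous f₂) (h t : ℝ) :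
    stek h (fun s => f s + f₂ s) t = stek h f t + stek h f₂ t := by
  unfold stek
  rw [integral_add (hf.intervalIntegrable _ _) (hf₂.intervalIntegrable _ _), smul_add]

theorem stek_neg (f : ℝ → E) (h t : ℝ) :
    stek h (fun s => -(f s)) t = -stek h f t := by
  unfold stek
  rw [intervalIntegral.integral_neg, smul_neg]

theorem stek_clm (L : E →L[ℝ] F) (hf : Continuous f) (h t : ℝ) :
    L (stek h f t) = stek h (fun s => L (f s)) t := by
  unfold stek
  rw [_root_.map_smul, L.intervalIntegral_comp_comm (hf.intervalIntegrable _ _)]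

theorem stek_shift (hf : Continuous f) (h t : ℝ) :
    h⁻¹ • (stek h f (t+h) - stek h f t) = stek h (fun s => h⁻¹ • (f (s+h) - f s)) t := by
  unfold stek
  rw [intervalIntegral.integral_smul]
  have i1 : IntervalIntegrable (fun s => f (s+h)) MeasureTheory.volume t (t+h) :=
    (hf.comp (by continuity)).intervalIntegrable _ _
  rw [integral_sub i1 (hf.intervalIntegrable _ _),
    intervalIntegral.integral_comp_add_right (fun s => f s) h]
  rw [smul_sub, smul_sub, smul_sub]


theorem stek_ftc {G G' : ℝ → E} (hh : 0 < h)
    (hd : ∀ s ∈ Ici (0:ℝ), HasDerivWithinAt G (G' s) (Ici 0) s)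
    (hG' : Continuous G') (ht : 0 ≤ t) :
    h⁻¹ • (G (t+h) - G t) = stek h G' t := by
  have hsub : Icc t (t+h) ⊆ Ici (0:ℝ) := fun s hs => mem_Ici.2 (by linarith [hs.1])
  have : ∫ s in t..(t+h), G' s = G (t+h) - G t := by
    refine integral_eq_sub_of_hasDeriv_right_of_le (by linarith) ?_ ?_
      (hG'.intervalIntegrable _ _)
    · exact fun s hs => ((hd s (hsub hs)).continuousWithinAt).mono hsub
    · intro s hs
      exact (hd s (mem_Ici.2 (by linarith [hs.1]))).mono
        (fun y hy => mem_Ici.2 (by linarith [mem_Ioi.1 hy, hs.1]))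
  unfold stek
  rw [this]

theorem stek_norm_le {c : E} {C : ℝ} (hh : 0 < h) (hf : Continuous f)
    (hC : ∀ s ∈ Icc t (t+h), ‖f s - c‖ ≤ C) : ‖stek h f t - c‖ ≤ C := by
  have hint : (∫ s in t..(t+h), (f s - c)) = (∫ s in t..(t+h), f s) - h • c := by
    rw [integral_sub (hf.intervalIntegrable _ _) (intervalIntegrable_const),
      intervalIntegral.integral_const, show t + h - t = h by ring]
  have h1 : ‖∫ s in t..(t+h), (f s - c)‖ ≤ C * |(t+h) - t| := by
    refine intervalIntegral.norm_integral_le_of_norm_le_const fun s hs => ?_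
    rw [uIoc_of_le (by linarith)] at hs
    exact hC s ⟨le_of_lt hs.1, hs.2⟩
  have heq : stek h f t - c = h⁻¹ • ∫ s in t..(t+h), (f s - c) := by
    unfold stek
    rw [hint, smul_sub, smul_smul, inv_mul_cancel₀ (ne_of_gt hh), one_smul]
  rw [heq, norm_smul]
  rw [show t + h - t = h by ring] at h1
  calc ‖h⁻¹‖ * ‖∫ s in t..(t+h), (f s - c)‖ ≤ ‖h⁻¹‖ * (C * |h|) := by
        exact mul_le_mul_of_nonneg_left h1 (norm_nonneg _)
      _ = C := by
        rw [Real.norm_eq_abs, abs_inv, abs_of_pos hh]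
        field_simp

theorem stek2_tendsto (hf : Continuous f) (t : ℝ) :
    Filter.Tendsto (fun h => stek h (stek h f) t) (nhdsWithin 0 (Ioi 0)) (nhds (f t)) := by
  rw [Metric.tendsto_nhdsWithin_nhds]
  intro ε hε
  obtain ⟨δ, hδ, hδ'⟩ := Metric.continuousAt_iff.1 (hf.continuousAt (x := t)) (ε/2) (by linarith)
  refine ⟨δ/3, by linarith, fun {h} hh hdist => ?_⟩
  rw [mem_Ioi] at hh
  rw [Real.dist_eq, sub_zero, abs_of_pos hh] at hdist
  have key : ∀ σ ∈ Icc t (t+h), ‖stek h f σ - f t‖ ≤ ε/2 := by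
    intro σ hσ
    refine stek_norm_le hh hf fun τ hτ => ?_
    have : dist τ t < δ := by
      rw [Real.dist_eq, abs_lt]
      constructor <;> [linarith [hτ.1, hσ.1]; linarith [hτ.2, hσ.2]]
    exact le_of_lt (by simpa [dist_eq_norm] using hδ' this)
  have : ‖stek h (stek h f) t - f t‖ ≤ ε/2 := stek_norm_le hh (stek_continuous hf) key
  rw [dist_eq_norm]
  linarith

end steklemmas

section stekinner
variable {E : Type*} [NormedAddCommGroup E] [InnerProductSpace ℝ E] [CompleteSpace E]
  {f : ℝ → E}

theorem stek_inner (hf : Continuous f) (c : E) (h t : ℝ) :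
    (inner ℝ (stek h f t) c : ℝ) = stek h (fun s => (inner ℝ (f s) c : ℝ)) t := by
  have h1 := stek_clm (innerSL ℝ c) hf h t
  simp only [innerSL_apply_apply] at h1
  rw [real_inner_comm, h1]
  congr 1
  funext s
  rw [real_inner_comm]

end stekinner


section gron
variable {H V : Type*} [NormedAddCommGroup H] [InnerProductSpace ℝ H] [CompleteSpace H]
  [NormedAddCommGroup V] [InnerProductSpace ℝ V] [CompleteSpace V]

theorem gronwall_aux (x : ℝ → H) (y g2 : ℝ → V) (t₀ : ℝ) (ht₀ : 0 ≤ t₀)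
    (cx : Continuous x) (cy : Continuous y) (cg2 : Continuous g2)
    (hd : ∀ p : ℝ, 0 ≤ p → HasDerivAt
      (fun s => (inner ℝ (x s) (x s) : ℝ) + (inner ℝ (y s) (y s) : ℝ))
      (2 * (inner ℝ (y p) (g2 p) : ℝ)) p) :
    ‖x t₀‖ ≤ ‖x 0‖ + ‖y 0‖ + ∫ s in (0:ℝ)..t₀, ‖g2 s‖ := by
  set φ : ℝ → ℝ := fun s => (inner ℝ (x s) (x s) : ℝ) + (inner ℝ (y s) (y s) : ℝ) with hφ_def
  have hφcont : Continuous φ := (cx.inner cx).add (cy.inner cy)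
  have hφnn : ∀ s, 0 ≤ φ s := fun s =>
    add_nonneg real_inner_self_nonneg real_inner_self_nonneg
  have hprim : ∀ p : ℝ, HasDerivAt (fun r => ∫ σ in (0:ℝ)..r, ‖g2 σ‖) (‖g2 p‖) p := fun p =>
    intervalIntegral.integral_hasDerivAt_right ((cg2.norm).intervalIntegrable _ _)
      ((cg2.norm).aestronglyMeasurable.stronglyMeasurableAtFilter) (cg2.norm).continuousAt
  have hδbound : ∀ δ : ℝ, 0 < δ →
      Real.sqrt (φ t₀ + δ) ≤ Real.sqrt (φ 0 + δ) + ∫ s in (0:ℝ)..t₀, ‖g2 s‖ := by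
    intro δ hδ
    have hsp : ∀ p, (0:ℝ) < φ p + δ := fun p => by linarith [hφnn p]
    set ψ : ℝ → ℝ := fun s => Real.sqrt (φ s + δ) - ∫ σ in (0:ℝ)..s, ‖g2 σ‖ with hψ_def
    have hψd : ∀ p, 0 < p → HasDerivAt ψ
        ((1/(2*Real.sqrt (φ p + δ))) * (2 * (inner ℝ (y p) (g2 p) : ℝ)) - ‖g2 p‖) p := by
      intro p hp
      have h1 : HasDerivAt (fun s => Real.sqrt (φ s + δ))
          ((1/(2*Real.sqrt (φ p + δ))) * (2 * (inner ℝ (y p) (g2 p) : ℝ))) p :=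
        (Real.hasDerivAt_sqrt (ne_of_gt (hsp p))).comp p ((hd p hp.le).add_const δ)
      exact h1.sub (hprim p)
    have hcont : ContinuousOn ψ (Icc 0 t₀) := by
      apply ContinuousOn.sub
      · exact (Real.continuous_sqrt.comp (hφcont.add continuous_const)).continuousOn
      · exact (continuous_iff_continuousAt.2 fun r => (hprim r).continuousAt).continuousOn
    have hanti : AntitoneOn ψ (Icc 0 t₀) := by
      apply antitoneOn_of_deriv_nonpos (convex_Icc 0 t₀) hcont
      · intro p hp
        rw [interior_Icc] at hp
        exact ((hψd p hp.1).differentiableAt).differentiableWithinAt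
      · intro p hp
        rw [interior_Icc] at hp
        rw [(hψd p hp.1).deriv]
        have hin : (inner ℝ (y p) (g2 p) : ℝ) ≤ ‖y p‖ * ‖g2 p‖ := real_inner_le_norm _ _
        have hyy : (inner ℝ (y p) (y p) : ℝ) = ‖y p‖^2 := real_inner_self_eq_norm_sq _
        have hyle : ‖y p‖ ≤ Real.sqrt (φ p + δ) := by
          apply Real.le_sqrt_of_sq_le
          have := real_inner_self_nonneg (x := x p)
          simp only [hφ_def]
          nlinarith
        have hS : 0 < Real.sqrt (φ p + δ) := Real.sqrt_pos.2 (hsp p)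
        have h2 : (inner ℝ (y p) (g2 p) : ℝ) ≤ Real.sqrt (φ p + δ) * ‖g2 p‖ :=
          hin.trans (mul_le_mul_of_nonneg_right hyle (norm_nonneg _))
        have h3 : (1/(2*Real.sqrt (φ p + δ))) * (2 * (inner ℝ (y p) (g2 p) : ℝ))
            = (inner ℝ (y p) (g2 p) : ℝ) / Real.sqrt (φ p + δ) := by
          field_simp
        rw [h3, sub_nonpos, div_le_iff₀ hS]
        calc (inner ℝ (y p) (g2 p) : ℝ) ≤ Real.sqrt (φ p + δ) * ‖g2 p‖ := h2
          _ = ‖g2 p‖ * Real.sqrt (φ p + δ) := by ring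
    have h4 : ψ t₀ ≤ ψ 0 := hanti ⟨le_rfl, ht₀⟩ ⟨ht₀, le_rfl⟩ ht₀
    simp only [hψ_def, intervalIntegral.integral_same, sub_zero] at h4
    linarith
  have hxle : ∀ δ : ℝ, 0 < δ →
      ‖x t₀‖ ≤ Real.sqrt (φ 0 + δ) + ∫ s in (0:ℝ)..t₀, ‖g2 s‖ := by
    intro δ hδ
    refine le_trans ?_ (hδbound δ hδ)
    apply Real.le_sqrt_of_sq_le
    have h5 : (inner ℝ (x t₀) (x t₀) : ℝ) = ‖x t₀‖^2 := real_inner_self_eq_norm_sq _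
    have h6 := real_inner_self_nonneg (x := y t₀)
    simp only [hφ_def]
    nlinarith
  have hxle0 : ‖x t₀‖ ≤ Real.sqrt (φ 0) + ∫ s in (0:ℝ)..t₀, ‖g2 s‖ := by
    have h8 : Filter.Tendsto (fun δ : ℝ => φ 0 + δ) (nhds 0) (nhds (φ 0 + 0)) :=
      tendsto_const_nhds.add Filter.tendsto_id
    have h9 := (Real.continuous_sqrt.tendsto (φ 0 + 0)).comp h8
    have htend : Filter.Tendsto (fun δ : ℝ => Real.sqrt (φ 0 + δ) + ∫ s in (0:ℝ)..t₀, ‖g2 s‖)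
        (nhdsWithin 0 (Ioi 0)) (nhds (Real.sqrt (φ 0 + 0) + ∫ s in (0:ℝ)..t₀, ‖g2 s‖)) := by
      apply Filter.Tendsto.mono_left _ nhdsWithin_le_nhds
      exact h9.add tendsto_const_nhds
    rw [add_zero] at htend
    refine ge_of_tendsto htend ?_
    filter_upwards [self_mem_nhdsWithin] with δ hδ
    exact hxle δ (mem_Ioi.1 hδ)
  have hsq : Real.sqrt (φ 0) ≤ ‖x 0‖ + ‖y 0‖ := by
    have h7 : φ 0 = ‖x 0‖^2 + ‖y 0‖^2 := by
      simp only [hφ_def, real_inner_self_eq_norm_sq]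
    rw [h7]
    calc Real.sqrt (‖x 0‖^2 + ‖y 0‖^2) ≤ Real.sqrt ((‖x 0‖ + ‖y 0‖)^2) :=
          Real.sqrt_le_sqrt (by nlinarith [norm_nonneg (x 0), norm_nonneg (y 0)])
      _ = ‖x 0‖ + ‖y 0‖ := Real.sqrt_sq (by positivity)
  linarith

end gron


set_option linter.unusedSectionVars false

section keyl
variable {H V : Type*} [NormedAddCommGroup H] [InnerProductSpace ℝ H] [CompleteSpace H]
  [NormedAddCommGroup V] [InnerProductSpace ℝ V] [CompleteSpace V]

theorem key_lemma (ι : V →L[ℝ] H) (D : Submodule ℝ V) (A : D →ₗ[ℝ] H)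
    (hGreen : ∀ (w : D) (v : V), (inner ℝ (A w) (ι v) : ℝ) + (inner ℝ ((w : V)) v : ℝ) = 0)
    (uD : ℝ → D) (u'c : ℝ → V) (w1 w2 : ℝ → H) (gc : ℝ → V)
    (cuV : Continuous (fun s => ((uD s : V))))
    (cu'c : Continuous u'c)
    (caa : Continuous (fun s => A (uD s)))
    (cw1 : Continuous w1) (cw2 : Continuous w2) (cgc : Continuous gc)
    (hu : ∀ s : ℝ, 0 ≤ s → HasDerivWithinAt (fun τ => ((uD τ : V))) (u'c s) (Ici 0) s)
    (hw : ∀ s : ℝ, 0 ≤ s → HasDerivWithinAt (fun τ => ι ((uD τ : V))) (w1 s) (Ici 0) s)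
    (hw1d : ∀ s : ℝ, 0 ≤ s → HasDerivWithinAt w1 (w2 s) (Ici 0) s)
    (heqn : ∀ s : ℝ, w2 s = A (uD s) + ι (gc s))
    (t₀ : ℝ) (ht₀ : 0 ≤ t₀) (h : ℝ) (hh : 0 < h) :
    ‖stek h (stek h (fun s => A (uD s))) t₀‖ ≤
      ‖stek h (stek h (fun s => A (uD s))) 0‖ + ‖stek h (stek h u'c) 0‖ +
        ∫ s in (0:ℝ)..t₀, ‖stek h (stek h gc) s‖ := by
  set aa : ℝ → H := fun s => A (uD s) with haa_def
  set uV : ℝ → V := fun s => ((uD s : V)) with huV_def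
  -- difference quotients (D-valued!)
  set Du : ℝ → D := fun s => h⁻¹ • (uD (s+h) - uD s) with hDu_def
  set D2 : ℝ → D := fun s => h⁻¹ • (Du (s+h) - Du s) with hD2_def
  set DuV : ℝ → V := fun s => h⁻¹ • (uV (s+h) - uV s) with hDuV_def
  have hDuV : ∀ s, ((Du s : V)) = DuV s := by
    intro s
    simp only [hDu_def, hDuV_def, huV_def, Submodule.coe_smul, AddSubgroupClass.coe_sub]
  set xd : ℝ → H := fun s => h⁻¹ • (aa (s+h) - aa s) with hxd_def
  have hxdA : ∀ s, xd s = A (Du s) := by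
    intro s
    simp only [hxd_def, hDu_def, haa_def]
    rw [LinearMap.map_smul, LinearMap.map_sub]
  have cshift : Continuous (fun s : ℝ => s + h) := continuous_id.add continuous_const
  have cDuV : Continuous DuV := continuous_const.smul ((cuV.comp cshift).sub cuV)
  have cxd : Continuous xd := continuous_const.smul ((caa.comp cshift).sub caa)
  set x : ℝ → H := stek h (stek h aa) with hx_def
  set y : ℝ → V := stek h DuV with hy_def
  set g2 : ℝ → V := stek h (stek h gc) with hg2_def
  have cx : Continuous x := stek_continuous (stek_continuous caa)
  have cy : Continuous y := stek_continuous cDuV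
  have cg2 : Continuous g2 := stek_continuous (stek_continuous cgc)
  -- derivatives of x and y
  have hxd' : ∀ t, HasDerivAt x (stek h xd t) t := by
    intro t
    have h1 := stek_hasDerivAt (f := stek h aa) (stek_continuous caa) h t
    rwa [stek_shift caa h t] at h1
  have hyd : ∀ t, HasDerivAt y ((D2 t : V)) t := by
    intro t
    have h1 := stek_hasDerivAt cDuV h t
    have e : ((D2 t : V)) = h⁻¹ • (DuV (t+h) - DuV t) := by
      simp only [hD2_def, Submodule.coe_smul, AddSubgroupClass.coe_sub, hDuV]
    rwa [← e] at h1
  -- smoothed Green identity for the difference quotients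
  have K1 : ∀ (t : ℝ) (v : V), (inner ℝ (stek h xd t) (ι v) : ℝ) = -(inner ℝ (y t) v : ℝ) := by
    intro t v
    rw [stek_inner cxd (ι v) h t]
    have e1 : (fun s => (inner ℝ (xd s) (ι v) : ℝ)) = fun s => -(inner ℝ (DuV s) v : ℝ) := by
      funext s
      rw [hxdA s]
      have h2 := hGreen (Du s) v
      rw [hDuV s] at h2
      linarith
    rw [e1, stek_neg, ← stek_inner cDuV v h t]
  -- smoothed equation
  have hDuVw : ∀ s, 0 ≤ s → ι (DuV s) = stek h w1 s := by
    intro s hs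
    have h1 := stek_ftc (G := fun τ => ι (uV τ)) (G' := w1) hh
      (fun σ hσ => hw σ (mem_Ici.1 hσ)) cw1 hs
    rw [← h1]
    simp only [hDuV_def, _root_.map_smul, _root_.map_sub]
  have K2 : ∀ t, 0 ≤ t → ι ((D2 t : V)) = x t + ι (g2 t) := by
    intro t ht
    have e0 : ((D2 t : V)) = h⁻¹ • (DuV (t+h) - DuV t) := by
      simp only [hD2_def, Submodule.coe_smul, AddSubgroupClass.coe_sub, hDuV]
    have e1 : ι ((D2 t : V)) = h⁻¹ • (ι (DuV (t+h)) - ι (DuV t)) := by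
      rw [e0, _root_.map_smul, _root_.map_sub]
    rw [e1, hDuVw (t+h) (by linarith), hDuVw t ht, stek_shift cw1 h t]
    have e2 : stek h (fun s => h⁻¹ • (w1 (s+h) - w1 s)) t = stek h (stek h w2) t :=
      stek_congr (fun s hs => stek_ftc hh (fun σ hσ => hw1d σ (mem_Ici.1 hσ)) cw2
        (mem_Ici.1 hs)) (le_of_lt hh) ht
    rw [e2]
    have e3 : stek h w2 = fun s => stek h aa s + stek h (fun τ => ι (gc τ)) s := by
      funext s
      rw [show w2 = fun τ => aa τ + ι (gc τ) from funext heqn]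
      exact stek_add caa (ι.continuous.comp cgc : Continuous fun τ => ι (gc τ)) h s
    rw [e3, stek_add (f := stek h aa) (f₂ := stek h (fun τ => ι (gc τ)))
      (stek_continuous caa)
      (stek_continuous (ι.continuous.comp cgc : Continuous fun τ => ι (gc τ))) h t]
    congr 1
    rw [hg2_def, stek_clm ι (stek_continuous cgc) h t]
    congr 1
    funext s
    exact (stek_clm ι cgc h s).symm
  -- energy derivative
  have hd : ∀ p : ℝ, 0 ≤ p → HasDerivAt
      (fun s => (inner ℝ (x s) (x s) : ℝ) + (inner ℝ (y s) (y s) : ℝ))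
      (2 * (inner ℝ (y p) (g2 p) : ℝ)) p := by
    intro t ht
    have hx1 := (hxd' t).inner ℝ (hxd' t)
    have hy1 := (hyd t).inner ℝ (hyd t)
    have hsum := hx1.add hy1
    refine hsum.congr_deriv ?_
    have k1 := K1 t (D2 t)
    rw [K2 t ht, inner_add_right] at k1
    have k2 := K1 t (g2 t)
    have c1 : (inner ℝ (x t) (stek h xd t) : ℝ) = (inner ℝ (stek h xd t) (x t) : ℝ) :=
      real_inner_comm _ _
    have c2 : (inner ℝ ((D2 t : V)) (y t) : ℝ) = (inner ℝ (y t) ((D2 t : V)) : ℝ) :=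
      real_inner_comm _ _
    linarith
  -- apply the abstract Gronwall estimate
  have main := gronwall_aux x y g2 t₀ ht₀ cx cy cg2 hd
  have hy0 : y 0 = stek h (stek h u'c) 0 := by
    refine stek_congr (fun s hs => ?_) hh.le le_rfl
    exact stek_ftc (G := uV) (G' := u'c) hh (fun σ hσ => hu σ (mem_Ici.1 hσ)) cu'c
      (mem_Ici.1 hs)
  rw [hy0] at main
  exact main

end keyl
section liml
variable {H V : Type*} [NormedAddCommGroup H] [InnerProductSpace ℝ H] [CompleteSpace H]
  [NormedAddCommGroup V] [InnerProductSpace ℝ V] [CompleteSpace V]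

theorem limit_lemma (aa : ℝ → H) (u'c gc : ℝ → V)
    (caa : Continuous aa) (cu'c : Continuous u'c) (cgc : Continuous gc)
    (haa0 : aa 0 = 0) (hu'c0 : u'c 0 = 0) (t₀ : ℝ) (ht₀ : 0 ≤ t₀)
    (key : ∀ h : ℝ, 0 < h → ‖stek h (stek h aa) t₀‖ ≤
      ‖stek h (stek h aa) 0‖ + ‖stek h (stek h u'c) 0‖ +
        ∫ s in (0:ℝ)..t₀, ‖stek h (stek h gc) s‖) :
    ‖aa t₀‖ ≤ ∫ s in (0:ℝ)..t₀, ‖gc s‖ := by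
  obtain ⟨M, hM⟩ :=
    (isCompact_Icc (a := (0:ℝ)) (b := t₀+2)).exists_bound_of_continuousOn cgc.continuousOn
  have T1 : Filter.Tendsto (fun h => ‖stek h (stek h aa) t₀‖) (nhdsWithin 0 (Ioi 0))
      (nhds ‖aa t₀‖) := (continuous_norm.tendsto _).comp (stek2_tendsto caa t₀)
  have T2 : Filter.Tendsto (fun h => ‖stek h (stek h aa) 0‖) (nhdsWithin 0 (Ioi 0))
      (nhds ‖aa 0‖) := (continuous_norm.tendsto _).comp (stek2_tendsto caa 0)
  have T3 : Filter.Tendsto (fun h => ‖stek h (stek h u'c) 0‖) (nhdsWithin 0 (Ioi 0))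
      (nhds ‖u'c 0‖) := (continuous_norm.tendsto _).comp (stek2_tendsto cu'c 0)
  have T4 : Filter.Tendsto (fun h : ℝ => ∫ s in (0:ℝ)..t₀, ‖stek h (stek h gc) s‖)
      (nhdsWithin 0 (Ioi 0)) (nhds (∫ s in (0:ℝ)..t₀, ‖gc s‖)) := by
    apply intervalIntegral.tendsto_integral_filter_of_dominated_convergence (bound := fun _ => M)
    · exact Filter.Eventually.of_forall fun h =>
        ((stek_continuous (stek_continuous cgc)).norm).aestronglyMeasurable.restrict
    · filter_upwards [Ioo_mem_nhdsGT_of_mem ⟨le_refl (0:ℝ), one_pos⟩] with h hh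
      apply MeasureTheory.ae_of_all
      intro s hsι
      rw [uIoc_of_le ht₀] at hsι
      rw [Real.norm_eq_abs, abs_of_nonneg (norm_nonneg _)]
      have hb1 : ∀ σ ∈ Icc s (s+h), ‖stek h gc σ - 0‖ ≤ M := by
        intro σ hσ
        rw [sub_zero]
        have hb2 : ∀ τ ∈ Icc σ (σ+h), ‖gc τ - 0‖ ≤ M := by
          intro τ hτ
          rw [sub_zero]
          refine hM τ ⟨?_, ?_⟩
          · have := hsι.1
            have := hσ.1
            have := hτ.1
            linarith
          · have := hsι.2
            have := hσ.2
            have := hτ.2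
            have := hh.2
            linarith
        have := stek_norm_le (c := (0:V)) hh.1 cgc hb2
        simpa using this
      have := stek_norm_le (c := (0:V)) hh.1 (stek_continuous cgc) hb1
      simpa using this
    · exact intervalIntegrable_const
    · exact MeasureTheory.ae_of_all _ fun s _ =>
        (continuous_norm.tendsto _).comp (stek2_tendsto cgc s)
  have Tsum := (T2.add T3).add T4
  simp only [haa0, hu'c0, norm_zero, zero_add, add_zero] at Tsum
  refine le_of_tendsto_of_tendsto T1 Tsum ?_
  filter_upwards [self_mem_nhdsWithin] with h hh
  exact key h (mem_Ioi.1 hh)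

end liml

/-- For f = ι ∘ g with g continuous V-valued, the strong solution satisfies
‖A u(t)‖_H ≤ ∫₀ᵗ ‖g(τ)‖_V dτ for all t ≥ 0. -/
theorem stmt4 {H V : Type*} [NormedAddCommGroup H] [InnerProductSpace ℝ H] [CompleteSpace H]
    [NormedAddCommGroup V] [InnerProductSpace ℝ V] [CompleteSpace V]
    (ι : V →L[ℝ] H) (hinj : Function.Injective ι) (hcomp : IsCompactOperator ι)
    (hdense : DenseRange ι)
    (C_T : ℝ) (hCT : 0 < C_T) (hbd : ∀ v : V, ‖ι v‖ ≤ C_T * ‖v‖)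
    (D : Submodule ℝ V) (A : D →ₗ[ℝ] H)
    (hGreen : ∀ (w : D) (v : V), (inner ℝ (A w) (ι v) : ℝ) + (inner ℝ ((w : V)) v : ℝ) = 0)
    (hSurj : ∀ h : H, ∃ w : D, ι ((w : V)) - A w = h)
    (g : ℝ → V) (hg : ContinuousOn g (Ici 0))
    (sol : StrongSol ι D A (fun t => ι (g t))) :
    ∀ t ∈ Ici (0:ℝ), ‖A (sol.u t)‖ ≤ ∫ τ in (0:ℝ)..t, ‖g τ‖ := by
  intro t₀ ht₀
  rw [mem_Ici] at ht₀
  -- the truncation map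
  have hmc : Continuous (fun s : ℝ => max s 0) := continuous_id.max continuous_const
  have hm0 : ∀ s : ℝ, max s 0 ∈ Ici (0:ℝ) := fun s => mem_Ici.2 (le_max_right s 0)
  have hmeq : ∀ s : ℝ, 0 ≤ s → max s 0 = s := fun s hs => max_eq_left hs
  -- continuity of the base functions on [0,∞)
  have contuV : ContinuousOn (fun s => ((sol.u s : V))) (Ici 0) :=
    fun s hs => (sol.hasDeriv_u s hs).continuousWithinAt
  have contw1 : ContinuousOn sol.w' (Ici 0) :=
    fun s hs => (sol.hasDeriv_w' s hs).continuousWithinAt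
  -- globally continuous extensions
  set uD : ℝ → D := fun s => sol.u (max s 0) with huD_def
  set u'c : ℝ → V := fun s => sol.u' (max s 0) with hu'c_def
  set w1 : ℝ → H := fun s => sol.w' (max s 0) with hw1_def
  set w2 : ℝ → H := fun s => sol.w'' (max s 0) with hw2_def
  set gc : ℝ → V := fun s => g (max s 0) with hgc_def
  have cuV : Continuous (fun s => ((uD s : V))) := contuV.comp_continuous hmc hm0
  have cu'c : Continuous u'c := sol.cont_u'.comp_continuous hmc hm0
  have caa : Continuous (fun s => A (uD s)) := sol.cont_Au.comp_continuous hmc hm0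
  have cw1 : Continuous w1 := contw1.comp_continuous hmc hm0
  have cw2 : Continuous w2 := sol.cont_w''.comp_continuous hmc hm0
  have cgc : Continuous gc := hg.comp_continuous hmc hm0
  -- derivatives of extensions within [0,∞)
  have hu : ∀ s : ℝ, 0 ≤ s → HasDerivWithinAt (fun τ => ((uD τ : V))) (u'c s) (Ici 0) s := by
    intro s hs
    have h0 := sol.hasDeriv_u s (mem_Ici.2 hs)
    have h1 : HasDerivWithinAt (fun τ => ((uD τ : V))) (sol.u' s) (Ici 0) s :=
      h0.congr (fun y hy => by simp only [huD_def, hmeq y (mem_Ici.1 hy)])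
        (by simp only [huD_def, hmeq s hs])
    simpa only [hu'c_def, hmeq s hs] using h1
  have hw : ∀ s : ℝ, 0 ≤ s → HasDerivWithinAt (fun τ => ι ((uD τ : V))) (w1 s) (Ici 0) s := by
    intro s hs
    have h0 := sol.hasDeriv_w s (mem_Ici.2 hs)
    have h1 : HasDerivWithinAt (fun τ => ι ((uD τ : V))) (sol.w' s) (Ici 0) s :=
      h0.congr (fun y hy => by simp only [huD_def, hmeq y (mem_Ici.1 hy)])
        (by simp only [huD_def, hmeq s hs])
    simpa only [hw1_def, hmeq s hs] using h1
  have hw1d : ∀ s : ℝ, 0 ≤ s → HasDerivWithinAt w1 (w2 s) (Ici 0) s := by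
    intro s hs
    have h0 := sol.hasDeriv_w' s (mem_Ici.2 hs)
    have h1 : HasDerivWithinAt w1 (sol.w'' s) (Ici 0) s :=
      h0.congr (fun y hy => by simp only [hw1_def, hmeq y (mem_Ici.1 hy)])
        (by simp only [hw1_def, hmeq s hs])
    simpa only [hw2_def, hmeq s hs] using h1
  -- the equation, everywhere
  have heqn : ∀ s : ℝ, w2 s = A (uD s) + ι (gc s) := fun s => sol.eqn (max s 0) (hm0 s)
  -- initial conditions
  have hu0 : sol.u 0 = 0 := by
    apply Subtype.ext
    simpa using sol.init_u
  have haa0 : A (uD 0) = 0 := by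
    simp only [huD_def]
    rw [show max (0:ℝ) 0 = 0 from max_self 0, hu0, map_zero]
  have hu'0 : sol.u' 0 = 0 := by
    have h1 : HasDerivWithinAt (fun s => ι ((sol.u s : V))) (ι (sol.u' 0)) (Ici 0) 0 :=
      ι.hasFDerivAt.comp_hasDerivWithinAt 0 (sol.hasDeriv_u 0 (mem_Ici.2 le_rfl))
    have h2 := sol.hasDeriv_w 0 (mem_Ici.2 le_rfl)
    have huniq : ι (sol.u' 0) = sol.w' 0 := by
      have hud : UniqueDiffWithinAt ℝ (Ici (0:ℝ)) 0 := uniqueDiffOn_Ici 0 0 (mem_Ici.2 le_rfl)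
      have e1 := hud.eq h1.hasFDerivWithinAt h2.hasFDerivWithinAt
      have e2 := congrArg (fun (L : ℝ →L[ℝ] H) => L 1) e1
      simpa using e2
    apply hinj
    rw [huniq, sol.init_w', map_zero]
  have hu'c0 : u'c 0 = 0 := by
    simp only [hu'c_def]
    rw [show max (0:ℝ) 0 = 0 from max_self 0, hu'0]
  -- key inequality for every Steklov parameter, then pass to the limit
  have key := fun (h : ℝ) (hh : 0 < h) =>
    key_lemma ι D A hGreen uD u'c w1 w2 gc cuV cu'c caa cw1 cw2 cgc hu hw hw1d heqn t₀ ht₀ h hh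
  have hfinal := limit_lemma (fun s => A (uD s)) u'c gc caa cu'c cgc haa0 hu'c0 t₀ ht₀ key
  have e1 : A (uD t₀) = A (sol.u t₀) := by simp only [huD_def, hmeq t₀ ht₀]
  have e2 : (∫ τ in (0:ℝ)..t₀, ‖gc τ‖) = ∫ τ in (0:ℝ)..t₀, ‖g τ‖ := by
    refine intervalIntegral.integral_congr fun τ hτ => ?_
    rw [uIcc_of_le ht₀] at hτ
    simp only [hgc_def, hmeq τ hτ.1]
  rw [← e1, ← e2]
  exact hfinal
end

section
/- Suppose f : [0,∞) → H is continuously differentiable with f(0) = 0, and let u be the strong solution of (ι∘u)'' = A u + f(t) with u(0) = 0, (ι∘u)'(0) = 0. Then for every t ≥ 0 the V-valued derivative satisfies ‖u̇(t)‖_V ≤ ∫₀^t ‖ḟ(τ)‖_H dτ, where ḟ denotes the H-valued derivative of f. -/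
open Set MeasureTheory intervalIntegral

lemma intInt {E : Type*} [NormedAddCommGroup E] {g : ℝ → E} (hg : ContinuousOn g (Ici 0))
    {a b : ℝ} (ha : 0 ≤ a) (hb : 0 ≤ b) : IntervalIntegrable g MeasureTheory.volume a b := by
  apply ContinuousOn.intervalIntegrable
  apply hg.mono
  intro x hx
  rcases le_total a b with h | h
  · rw [uIcc_of_le h] at hx; exact le_trans ha hx.1
  · rw [uIcc_of_ge h] at hx; exact le_trans hb hx.1

lemma primitive_hasDeriv {E : Type*} [NormedAddCommGroup E] [NormedSpace ℝ E] [CompleteSpace E]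
    {g : ℝ → E} (hg : ContinuousOn g (Ici 0)) {t : ℝ} (ht : t ∈ Ici (0:ℝ)) :
    HasDerivWithinAt (fun s => ∫ τ in (0:ℝ)..s, g τ) (g t) (Ici 0) t := by
  rcases eq_or_lt_of_le (mem_Ici.1 ht) with h0 | h0
  · subst h0
    exact integral_hasDerivWithinAt_right (intInt hg le_rfl le_rfl)
      ⟨Ici 0, Filter.mem_of_superset self_mem_nhdsWithin Ioi_subset_Ici_self,
        hg.aestronglyMeasurable measurableSet_Ici⟩
      (hg.continuousWithinAt self_mem_Ici |>.mono Ioi_subset_Ici_self)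
  · have : HasDerivAt (fun s => ∫ τ in (0:ℝ)..s, g τ) (g t) t := by
      apply integral_hasDerivAt_right (intInt hg le_rfl (le_of_lt h0))
      · exact ⟨Ici 0, mem_nhds_iff.2 ⟨Ioi 0, fun x hx => mem_Ici.2 (le_of_lt (mem_Ioi.1 hx)), isOpen_Ioi, h0⟩,
          hg.aestronglyMeasurable measurableSet_Ici⟩
      · exact hg.continuousAt (mem_nhds_iff.2 ⟨Ioi 0, fun x hx => mem_Ici.2 (le_of_lt (mem_Ioi.1 hx)), isOpen_Ioi, h0⟩)
    exact this.hasDerivWithinAt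

lemma sqrt_helper {x y : ℝ} (hx : 0 ≤ x) (hy : 0 ≤ y) : Real.sqrt (x^2 + y^2) ≤ x + y := by
  have h : x^2 + y^2 ≤ (x+y)^2 := by nlinarith
  calc Real.sqrt (x^2+y^2) ≤ Real.sqrt ((x+y)^2) := Real.sqrt_le_sqrt h
    _ = x + y := Real.sqrt_sq (by positivity)

lemma dq {E : Type*} [NormedAddCommGroup E] [NormedSpace ℝ E] {h : ℝ} (hh : 0 ≤ h)
    {F F' : ℝ → E} (hF : ∀ t ∈ Ici (0:ℝ), HasDerivWithinAt F (F' t) (Ici 0) t)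
    {t : ℝ} (ht : t ∈ Ici (0:ℝ)) :
    HasDerivWithinAt (fun s => h⁻¹ • (F (s + h) - F s)) (h⁻¹ • (F' (t + h) - F' t)) (Ici 0) t := by
  have hth : t + h ∈ Ici (0:ℝ) := add_nonneg ht hh
  have hshift : HasDerivWithinAt (fun s => F (s + h)) (F' (t + h)) (Ici 0) t := by
    have hmap : MapsTo (fun s : ℝ => s + h) (Ici (0:ℝ)) (Ici (0:ℝ)) := fun x hx => add_nonneg hx hh
    have hid : HasDerivWithinAt (fun s : ℝ => s + h) 1 (Ici (0:ℝ)) t :=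
      ((hasDerivAt_id t).add_const h).hasDerivWithinAt
    have := (hF (t+h) hth).scomp t hid hmap
    simpa [Function.comp_def] using this
  exact (hshift.sub (hF t ht)).const_smul h⁻¹

lemma cont_shift {E : Type*} [NormedAddCommGroup E] {h : ℝ} (hh : 0 ≤ h)
    {F : ℝ → E} (hF : ContinuousOn F (Ici 0)) :
    ContinuousOn (fun s => F (s + h)) (Ici 0) :=
  hF.comp ((continuous_id.add continuous_const).continuousOn) (fun x hx => add_nonneg hx hh)

lemma energy {H V : Type*} [NormedAddCommGroup H] [InnerProductSpace ℝ H] [CompleteSpace H]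
    [NormedAddCommGroup V] [InnerProductSpace ℝ V] [CompleteSpace V]
    (ι : V →L[ℝ] H) (D : Submodule ℝ V) (A : D →ₗ[ℝ] H)
    (hGreen : ∀ (w : D) (v : V), (inner ℝ (A w) (ι v) : ℝ) + (inner ℝ ((w : V)) v : ℝ) = 0)
    (u : ℝ → D) (u' : ℝ → V) (w'' g : ℝ → H)
    (hu : ∀ t ∈ Ici (0:ℝ), HasDerivWithinAt (fun s => ((u s : V))) (u' t) (Ici 0) t)
    (hw' : ∀ t ∈ Ici (0:ℝ), HasDerivWithinAt (fun s => ι (u' s)) (w'' t) (Ici 0) t)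
    (heqn : ∀ t ∈ Ici (0:ℝ), w'' t = A (u t) + g t)
    (hg : ContinuousOn g (Ici 0)) :
    ∀ t ∈ Ici (0:ℝ), Real.sqrt (‖ι (u' t)‖^2 + ‖(u t : V)‖^2)
      ≤ Real.sqrt (‖ι (u' 0)‖^2 + ‖(u 0 : V)‖^2) + ∫ τ in (0:ℝ)..t, ‖g τ‖ := by
  intro t ht
  set Q : ℝ → ℝ := fun s => ‖ι (u' s)‖^2 + ‖(u s : V)‖^2 with hQdef
  have hQnn : ∀ s, 0 ≤ Q s := fun s => by positivity
  have hQ : ∀ s ∈ Ici (0:ℝ), HasDerivWithinAt Q (2 * inner ℝ (g s) (ι (u' s))) (Ici 0) s := by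
    intro s hs
    have h1 : HasDerivWithinAt (fun r => (inner ℝ (ι (u' r)) (ι (u' r)) : ℝ))
        ((inner ℝ (ι (u' s)) (w'' s) : ℝ) + inner ℝ (w'' s) (ι (u' s))) (Ici 0) s :=
      (hw' s hs).inner ℝ (hw' s hs)
    have h2 : HasDerivWithinAt (fun r => (inner ℝ ((u r : V)) ((u r : V)) : ℝ))
        ((inner ℝ ((u s : V)) (u' s) : ℝ) + inner ℝ (u' s) ((u s : V))) (Ici 0) s :=
      (hu s hs).inner ℝ (hu s hs)
    have h3 := h1.add h2
    have he : ∀ r, (inner ℝ (ι (u' r)) (ι (u' r)) : ℝ) + (inner ℝ ((u r : V)) ((u r : V)) : ℝ) = Q r := by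
      intro r
      simp [hQdef, real_inner_self_eq_norm_sq]
    have hval : (inner ℝ (ι (u' s)) (w'' s) : ℝ) + inner ℝ (w'' s) (ι (u' s))
        + ((inner ℝ ((u s : V)) (u' s) : ℝ) + inner ℝ (u' s) ((u s : V)))
        = 2 * inner ℝ (g s) (ι (u' s)) := by
      have hG := hGreen (u s) (u' s)
      have c1 : (inner ℝ (ι (u' s)) (A (u s)) : ℝ) = inner ℝ (A (u s)) (ι (u' s)) := real_inner_comm _ _
      have c2 : (inner ℝ (ι (u' s)) (g s) : ℝ) = inner ℝ (g s) (ι (u' s)) := real_inner_comm _ _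
      have c3 : (inner ℝ (u' s) ((u s : V)) : ℝ) = inner ℝ ((u s : V)) (u' s) := real_inner_comm _ _
      rw [heqn s hs, inner_add_right, inner_add_left]
      linarith
    rw [← hval]
    exact h3.congr (fun r _ => (he r).symm) (he s).symm
  -- the epsilon argument
  have main : ∀ ε : ℝ, 0 < ε → Real.sqrt (Q t) ≤ Real.sqrt (Q 0) + ε + ∫ τ in (0:ℝ)..t, ‖g τ‖ := by
    intro ε hε
    set φ : ℝ → ℝ := fun s => Real.sqrt (Q s + ε^2) with hφdef
    have hQpos : ∀ s, 0 < Q s + ε^2 := fun s => by nlinarith [hQnn s]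
    have hφd : ∀ s ∈ Ici (0:ℝ), HasDerivWithinAt φ
        ((1 / (2 * Real.sqrt (Q s + ε^2))) * (2 * inner ℝ (g s) (ι (u' s)))) (Ici 0) s := by
      intro s hs
      have := (Real.hasDerivAt_sqrt (ne_of_gt (hQpos s))).comp_hasDerivWithinAt s
        ((hQ s hs).add_const (ε^2))
      exact this
    have hgn : ContinuousOn (fun τ => ‖g τ‖) (Ici 0) := hg.norm
    set ψ : ℝ → ℝ := fun s => φ s - ∫ τ in (0:ℝ)..s, ‖g τ‖ with hψdef
    have hψd : ∀ s ∈ Ici (0:ℝ), HasDerivWithinAt ψ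
        ((1 / (2 * Real.sqrt (Q s + ε^2))) * (2 * inner ℝ (g s) (ι (u' s))) - ‖g s‖) (Ici 0) s :=
      fun s hs => (hφd s hs).sub (primitive_hasDeriv hgn hs)
    have hanti : AntitoneOn ψ (Ici 0) := by
      apply antitoneOn_of_deriv_nonpos (convex_Ici 0)
      · exact fun s hs => ((hψd s hs).continuousWithinAt)
      · intro s hs
        rw [interior_Ici] at hs
        exact ((hψd s (mem_Ici.2 (le_of_lt (mem_Ioi.1 hs)))).hasDerivAt (Ici_mem_nhds (mem_Ioi.1 hs))).differentiableAt.differentiableWithinAt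
      · intro s hs
        rw [interior_Ici] at hs
        rw [((hψd s (mem_Ici.2 (le_of_lt (mem_Ioi.1 hs)))).hasDerivAt (Ici_mem_nhds (mem_Ioi.1 hs))).deriv]
        have hsq : Real.sqrt (Q s + ε^2) > 0 := Real.sqrt_pos.2 (hQpos s)
        have hle : (inner ℝ (g s) (ι (u' s)) : ℝ) ≤ ‖g s‖ * Real.sqrt (Q s + ε^2) := by
          calc (inner ℝ (g s) (ι (u' s)) : ℝ) ≤ ‖g s‖ * ‖ι (u' s)‖ := real_inner_le_norm _ _
            _ ≤ ‖g s‖ * Real.sqrt (Q s + ε^2) := by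
                apply mul_le_mul_of_nonneg_left _ (norm_nonneg _)
                rw [show ‖ι (u' s)‖ = Real.sqrt (‖ι (u' s)‖^2) from (Real.sqrt_sq (norm_nonneg _)).symm]
                apply Real.sqrt_le_sqrt
                have hQs : Q s = ‖ι (u' s)‖^2 + ‖((u s : V))‖^2 := rfl
                nlinarith [sq_nonneg ‖((u s : V))‖]
        rw [div_mul_eq_mul_div, one_mul, sub_nonpos, div_le_iff₀ (by positivity)]
        nlinarith
    have h0t : ψ t ≤ ψ 0 := hanti self_mem_Ici ht ht
    have : φ t ≤ φ 0 + ∫ τ in (0:ℝ)..t, ‖g τ‖ := by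
      simp only [hψdef, intervalIntegral.integral_same] at h0t
      linarith [h0t]
    calc Real.sqrt (Q t) ≤ φ t := Real.sqrt_le_sqrt (by nlinarith)
      _ ≤ φ 0 + ∫ τ in (0:ℝ)..t, ‖g τ‖ := this
      _ ≤ (Real.sqrt (Q 0) + ε) + ∫ τ in (0:ℝ)..t, ‖g τ‖ := by
          have h1 : Q 0 + ε^2 ≤ (Real.sqrt (Q 0) + ε)^2 := by
            have h2 := Real.sq_sqrt (hQnn 0)
            nlinarith [Real.sqrt_nonneg (Q 0)]
          have : φ 0 ≤ Real.sqrt (Q 0) + ε :=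
            le_trans (Real.sqrt_le_sqrt h1) (le_of_eq (Real.sqrt_sq (by positivity)))
          linarith
  have hfin : Real.sqrt (Q t) ≤ Real.sqrt (Q 0) + ∫ τ in (0:ℝ)..t, ‖g τ‖ := by
    apply le_of_forall_pos_le_add
    intro ε hε
    have := main ε hε
    linarith
  exact hfin


/-- If f : [0,∞) → H is C¹ with f(0) = 0, the V-valued derivative of the strong
solution satisfies ‖u̇(t)‖_V ≤ ∫₀ᵗ ‖ḟ(τ)‖_H dτ for all t ≥ 0. -/
theorem stmt6 {H V : Type*} [NormedAddCommGroup H] [InnerProductSpace ℝ H] [CompleteSpace H]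
    [NormedAddCommGroup V] [InnerProductSpace ℝ V] [CompleteSpace V]
    (ι : V →L[ℝ] H) (hinj : Function.Injective ι) (hcomp : IsCompactOperator ι)
    (hdense : DenseRange ι)
    (C_T : ℝ) (hCT : 0 < C_T) (hbd : ∀ v : V, ‖ι v‖ ≤ C_T * ‖v‖)
    (D : Submodule ℝ V) (A : D →ₗ[ℝ] H)
    (hGreen : ∀ (w : D) (v : V), (inner ℝ (A w) (ι v) : ℝ) + (inner ℝ ((w : V)) v : ℝ) = 0)
    (hSurj : ∀ h : H, ∃ w : D, ι ((w : V)) - A w = h)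
    (f f' : ℝ → H)
    (hf : ∀ t ∈ Ici (0:ℝ), HasDerivWithinAt f (f' t) (Ici 0) t)
    (hf' : ContinuousOn f' (Ici 0))
    (hf0 : f 0 = 0)
    (sol : StrongSol ι D A f) :
    ∀ t ∈ Ici (0:ℝ), ‖sol.u' t‖ ≤ ∫ τ in (0:ℝ)..t, ‖f' τ‖ := by
  have hfc : ContinuousOn f (Ici 0) := fun s hs => (hf s hs).continuousWithinAt
  -- w' = ι ∘ u' on Ici 0
  have hw'eq : ∀ t ∈ Ici (0:ℝ), sol.w' t = ι (sol.u' t) := by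
    intro t ht
    have h1 := (sol.hasDeriv_w t ht).derivWithin (uniqueDiffOn_Ici 0 t ht)
    have h2 : HasDerivWithinAt (fun s => ι ((sol.u s : V))) (ι (sol.u' t)) (Ici 0) t :=
      ι.hasFDerivAt.comp_hasDerivWithinAt t (sol.hasDeriv_u t ht)
    rw [← h1, ← h2.derivWithin (uniqueDiffOn_Ici 0 t ht)]
  have hsolw' : ∀ t ∈ Ici (0:ℝ), HasDerivWithinAt (fun s => ι (sol.u' s)) (sol.w'' t) (Ici 0) t :=
    fun t ht => (sol.hasDeriv_w' t ht).congr (fun s hs => (hw'eq s hs).symm) (hw'eq t ht).symm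
  have hbase := energy ι D A hGreen sol.u sol.u' sol.w'' f sol.hasDeriv_u hsolw' sol.eqn hfc
  have hz0 : ι (sol.u' 0) = 0 := (hw'eq 0 self_mem_Ici).symm.trans sol.init_w'
  have h00 : Real.sqrt (‖ι (sol.u' 0)‖^2 + ‖((sol.u 0 : V))‖^2) = 0 := by
    rw [hz0, sol.init_u]; simp
  have hbaseU : ∀ s ∈ Ici (0:ℝ), ‖((sol.u s : V))‖ ≤ ∫ τ in (0:ℝ)..s, ‖f τ‖ := by
    intro s hs
    have hb := hbase s hs; rw [h00, zero_add] at hb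
    refine le_trans ?_ hb
    exact Real.le_sqrt_of_sq_le (by nlinarith [sq_nonneg ‖ι (sol.u' s)‖])
  have hbaseW : ∀ s ∈ Ici (0:ℝ), ‖ι (sol.u' s)‖ ≤ ∫ τ in (0:ℝ)..s, ‖f τ‖ := by
    intro s hs
    have hb := hbase s hs; rw [h00, zero_add] at hb
    refine le_trans ?_ hb
    exact Real.le_sqrt_of_sq_le (by nlinarith [sq_nonneg ‖((sol.u s : V))‖])
  intro t ht
  have ht0 : (0:ℝ) ≤ t := ht
  set F : ℝ → ℝ := fun s => ∫ τ in (0:ℝ)..s, ‖f' τ‖ with hFdef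
  have hf'n : ContinuousOn (fun τ => ‖f' τ‖) (Ici 0) := hf'.norm
  have hFd : ∀ s ∈ Ici (0:ℝ), HasDerivWithinAt F (‖f' s‖) (Ici 0) s :=
    fun s hs => primitive_hasDeriv hf'n hs
  have hFc : ContinuousOn F (Ici 0) := fun s hs => (hFd s hs).continuousWithinAt
  have hFsplit : ∀ a b : ℝ, 0 ≤ a → a ≤ b → F a + (∫ τ in a..b, ‖f' τ‖) = F b :=
    fun a b ha hab => integral_add_adjacent_intervals (intInt hf'n le_rfl ha)
      (intInt hf'n ha (le_trans ha hab))
  have hFmono : ∀ a b : ℝ, 0 ≤ a → a ≤ b → F a ≤ F b := by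
    intro a b ha hab
    have h1 := hFsplit a b ha hab
    have h2 : 0 ≤ ∫ τ in a..b, ‖f' τ‖ := integral_nonneg hab (fun x _ => norm_nonneg _)
    linarith
  have hFnn : ∀ a : ℝ, 0 ≤ a → 0 ≤ F a :=
    fun a ha => integral_nonneg ha (fun x _ => norm_nonneg _)
  -- key inequality for positive h
  have key : ∀ h : ℝ, 0 < h →
      ‖h⁻¹ • (((sol.u (t+h) : V)) - ((sol.u t : V)))‖ ≤
        h⁻¹ * (∫ τ in (0:ℝ)..h, ‖f τ‖) + h⁻¹ * (∫ τ in (0:ℝ)..h, ‖f τ‖) + F (t + h) := by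
    intro h hh
    have hh' : (0:ℝ) ≤ h := hh.le
    set uh : ℝ → D := fun s => h⁻¹ • (sol.u (s+h) - sol.u s) with huh
    set u'h : ℝ → V := fun s => h⁻¹ • (sol.u' (s+h) - sol.u' s) with hu'h
    set w''h : ℝ → H := fun s => h⁻¹ • (sol.w'' (s+h) - sol.w'' s) with hw''h
    set gh : ℝ → H := fun s => h⁻¹ • (f (s+h) - f s) with hgh
    have hA : ∀ s ∈ Ici (0:ℝ), HasDerivWithinAt (fun r => ((uh r : V))) (u'h s) (Ici 0) s := by
      intro s hs
      have hd := dq hh' sol.hasDeriv_u hs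
      exact hd.congr (fun r _ => by simp [huh]) (by simp [huh])
    have hB : ∀ s ∈ Ici (0:ℝ), HasDerivWithinAt (fun r => ι (u'h r)) (w''h s) (Ici 0) s := by
      intro s hs
      have hd := dq hh' sol.hasDeriv_w' hs
      refine hd.congr (fun r hr => ?_) ?_
      · simp [hu'h, _root_.map_smul, map_sub, ← hw'eq (r+h) (add_nonneg hr hh'), ← hw'eq r hr]
      · simp [hu'h, _root_.map_smul, map_sub, ← hw'eq (s+h) (add_nonneg hs hh'), ← hw'eq s hs]
    have hEqn : ∀ s ∈ Ici (0:ℝ), w''h s = A (uh s) + gh s := by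
      intro s hs
      simp only [hw''h, huh, hgh, sol.eqn (s+h) (add_nonneg hs hh'), sol.eqn s hs,
        _root_.map_smul, map_sub, smul_sub, smul_add]
      module
    have hgc : ContinuousOn gh (Ici 0) := ((cont_shift hh' hfc).sub hfc).const_smul h⁻¹
    have hen := energy ι D A hGreen uh u'h w''h gh hA hB hEqn hgc t ht
    -- initial data bounds
    have hnorm_smul : ∀ x : H, ‖h⁻¹ • x‖ = h⁻¹ * ‖x‖ := by
      intro x; rw [norm_smul, Real.norm_eq_abs, abs_of_pos (inv_pos.2 hh)]
    have hnorm_smulV : ∀ x : V, ‖h⁻¹ • x‖ = h⁻¹ * ‖x‖ := by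
      intro x; rw [norm_smul, Real.norm_eq_abs, abs_of_pos (inv_pos.2 hh)]
    have hI0 : ‖ι (u'h 0)‖ ≤ h⁻¹ * ∫ τ in (0:ℝ)..h, ‖f τ‖ := by
      have e1 : ι (u'h 0) = h⁻¹ • (ι (sol.u' h)) := by
        simp [hu'h, _root_.map_smul, map_sub, hz0]
      rw [e1, hnorm_smul]
      exact mul_le_mul_of_nonneg_left (hbaseW h hh') (by positivity)
    have hU0 : ‖((uh 0 : V))‖ ≤ h⁻¹ * ∫ τ in (0:ℝ)..h, ‖f τ‖ := by
      have e1 : ((uh 0 : V)) = h⁻¹ • ((sol.u h : V)) := by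
        simp [huh, sol.init_u]
      rw [e1, hnorm_smulV]
      exact mul_le_mul_of_nonneg_left (hbaseU h hh') (by positivity)
    -- integral bound
    have hIgh : (∫ τ in (0:ℝ)..t, ‖gh τ‖) ≤ F (t + h) := by
      have hpt : ∀ τ ∈ Icc (0:ℝ) t, ‖gh τ‖ ≤ h⁻¹ * (F (τ+h) - F τ) := by
        intro τ hτ
        have hτ0 : (0:ℝ) ≤ τ := hτ.1
        have hτh : τ ≤ τ + h := by linarith
        have hfint : f (τ+h) - f τ = ∫ σ in τ..(τ+h), f' σ := by
          rw [integral_eq_sub_of_hasDeriv_right_of_le hτh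
            (hfc.mono (fun x hx => le_trans hτ0 hx.1))
            (fun x hx => ((hf x (le_trans hτ0 hx.1.le)).hasDerivAt
              (Ici_mem_nhds (lt_of_le_of_lt hτ0 hx.1))).hasDerivWithinAt)
            (intInt hf' hτ0 (by linarith))]
        have hb : ‖f (τ+h) - f τ‖ ≤ F (τ+h) - F τ := by
          rw [hfint]
          calc ‖∫ σ in τ..(τ+h), f' σ‖ ≤ ∫ σ in τ..(τ+h), ‖f' σ‖ :=
            norm_integral_le_integral_norm hτh
          _ = F (τ+h) - F τ := by
            have := hFsplit τ (τ+h) hτ0 hτh; linarith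
        rw [show gh τ = h⁻¹ • (f (τ+h) - f τ) from rfl, hnorm_smul]
        exact mul_le_mul_of_nonneg_left hb (by positivity)
      have hint1 : IntervalIntegrable (fun τ => ‖gh τ‖) MeasureTheory.volume 0 t :=
        intInt hgc.norm le_rfl ht
      have hcont2 : ContinuousOn (fun τ => h⁻¹ * (F (τ+h) - F τ)) (Ici 0) := by
        exact (((cont_shift hh' hFc).sub hFc).const_smul h⁻¹)
      have hint2 : IntervalIntegrable (fun τ => h⁻¹ * (F (τ+h) - F τ)) MeasureTheory.volume 0 t :=
        intInt hcont2 le_rfl ht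
      have hmono := integral_mono_on ht hint1 hint2 hpt
      refine le_trans hmono ?_
      have hintF : IntervalIntegrable F MeasureTheory.volume 0 t := intInt hFc le_rfl ht
      have hintFs : IntervalIntegrable (fun τ => F (τ+h)) MeasureTheory.volume 0 t :=
        intInt (cont_shift hh' hFc) le_rfl ht
      have e1 : (∫ τ in (0:ℝ)..t, h⁻¹ * (F (τ+h) - F τ))
          = h⁻¹ * ((∫ τ in (0:ℝ)..t, F (τ+h)) - ∫ τ in (0:ℝ)..t, F τ) := by
        rw [← integral_sub hintFs hintF, ← intervalIntegral.integral_const_mul]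
      have e2 : (∫ τ in (0:ℝ)..t, F (τ+h)) = ∫ τ in h..(t+h), F τ := by
        simpa using integral_comp_add_right (a := 0) (b := t) (fun τ => F τ) h
      have e3 : (∫ τ in h..(t+h), F τ) - (∫ τ in (0:ℝ)..t, F τ)
          = (∫ τ in t..(t+h), F τ) - ∫ τ in (0:ℝ)..h, F τ := by
        have a1 : (∫ τ in (0:ℝ)..h, F τ) + (∫ τ in h..(t+h), F τ) = ∫ τ in (0:ℝ)..(t+h), F τ :=
          integral_add_adjacent_intervals (intInt hFc le_rfl hh') (intInt hFc hh' (by linarith))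
        have a2 : (∫ τ in (0:ℝ)..t, F τ) + (∫ τ in t..(t+h), F τ) = ∫ τ in (0:ℝ)..(t+h), F τ :=
          integral_add_adjacent_intervals hintF (intInt hFc ht (by linarith))
        linarith
      have e4 : (∫ τ in t..(t+h), F τ) ≤ h * F (t+h) := by
        have : (∫ τ in t..(t+h), F τ) ≤ ∫ _ in t..(t+h), F (t+h) := by
          apply integral_mono_on (by linarith) (intInt hFc ht (by linarith))
            intervalIntegrable_const
          exact fun x hx => hFmono x (t+h) (le_trans ht hx.1) hx.2
        simpa using le_trans this (le_of_eq (by rw [intervalIntegral.integral_const]; ring_nf))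
      have e5 : 0 ≤ ∫ τ in (0:ℝ)..h, F τ :=
        integral_nonneg hh' (fun x hx => hFnn x hx.1)
      rw [e1, e2]
      calc h⁻¹ * ((∫ τ in h..(t+h), F τ) - ∫ τ in (0:ℝ)..t, F τ)
          ≤ h⁻¹ * (h * F (t+h)) := by
            apply mul_le_mul_of_nonneg_left _ (by positivity)
            rw [e3]; linarith
        _ = F (t+h) := by field_simp
    -- combine
    have hchain : ‖((uh t : V))‖ ≤ ‖ι (u'h 0)‖ + ‖((uh 0 : V))‖ + ∫ τ in (0:ℝ)..t, ‖gh τ‖ := by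
      have s1 : ‖((uh t : V))‖ ≤ Real.sqrt (‖ι (u'h t)‖^2 + ‖((uh t : V))‖^2) :=
        Real.le_sqrt_of_sq_le (by nlinarith [sq_nonneg ‖ι (u'h t)‖])
      have s2 := sqrt_helper (norm_nonneg (ι (u'h 0))) (norm_nonneg ((uh 0 : V)))
      linarith [hen, s1, s2]
    have efin : ‖h⁻¹ • (((sol.u (t+h) : V)) - ((sol.u t : V)))‖ = ‖((uh t : V))‖ := by
      simp [huh]
    rw [efin]
    calc ‖((uh t : V))‖ ≤ ‖ι (u'h 0)‖ + ‖((uh 0 : V))‖ + ∫ τ in (0:ℝ)..t, ‖gh τ‖ := hchain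
      _ ≤ h⁻¹ * (∫ τ in (0:ℝ)..h, ‖f τ‖) + h⁻¹ * (∫ τ in (0:ℝ)..h, ‖f τ‖) + F (t+h) := by
          gcongr
  -- limits as h → 0+
  have hmapT : Filter.Tendsto (fun h : ℝ => t + h) (nhdsWithin 0 (Ioi 0))
      (nhdsWithin t (Ici 0 \ {t})) := by
    rw [tendsto_nhdsWithin_iff]
    constructor
    · have : Filter.Tendsto (fun h : ℝ => t + h) (nhds 0) (nhds (t + 0)) :=
        (continuous_const.add continuous_id).tendsto 0
      simpa using this.mono_left nhdsWithin_le_nhds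
    · filter_upwards [self_mem_nhdsWithin] with h hh
      exact ⟨by simp only [mem_Ici]; linarith [mem_Ioi.1 hh], by
        simp only [mem_singleton_iff]; intro hc; have := mem_Ioi.1 hh; linarith
          [congrArg (fun x => x - t) hc]⟩
  have hmapT' : Filter.Tendsto (fun h : ℝ => t + h) (nhdsWithin 0 (Ioi 0))
      (nhdsWithin t (Ici 0)) := by
    refine hmapT.mono_right (nhdsWithin_mono t ?_)
    exact diff_subset
  have hLHS : Filter.Tendsto
      (fun h : ℝ => ‖h⁻¹ • (((sol.u (t+h) : V)) - ((sol.u t : V)))‖)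
      (nhdsWithin 0 (Ioi 0)) (nhds ‖sol.u' t‖) := by
    have hslope := sol.hasDeriv_u t ht
    rw [hasDerivWithinAt_iff_tendsto_slope] at hslope
    have hc := hslope.comp hmapT
    have he : (fun h : ℝ => h⁻¹ • (((sol.u (t+h) : V)) - ((sol.u t : V))))
        = (slope (fun s => ((sol.u s : V))) t) ∘ (fun h : ℝ => t + h) := by
      funext h
      simp [slope_def_module, Function.comp]
    exact ((continuous_norm.tendsto _).comp (by rw [he]; exact hc))
  have hP0 : Filter.Tendsto (fun h : ℝ => h⁻¹ * ∫ τ in (0:ℝ)..h, ‖f τ‖)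
      (nhdsWithin 0 (Ioi 0)) (nhds 0) := by
    have hprim := primitive_hasDeriv hfc.norm (self_mem_Ici (a := (0:ℝ)))
    rw [hasDerivWithinAt_iff_tendsto_slope] at hprim
    have hIci : Ici (0:ℝ) \ {0} = Ioi 0 := Ici_sdiff_left
    rw [hIci] at hprim
    have h0 : ‖f 0‖ = 0 := by rw [hf0, norm_zero]
    rw [h0] at hprim
    refine hprim.congr' ?_
    filter_upwards [self_mem_nhdsWithin] with h hh
    have : (h : ℝ) ≠ 0 := ne_of_gt (mem_Ioi.1 hh)
    simp [slope_def_field, intervalIntegral.integral_same, smul_eq_mul]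
    ring
  have hF : Filter.Tendsto (fun h : ℝ => F (t + h)) (nhdsWithin 0 (Ioi 0)) (nhds (F t)) :=
    (hFc t ht).tendsto.comp hmapT'
  have hRHS : Filter.Tendsto (fun h : ℝ =>
      h⁻¹ * (∫ τ in (0:ℝ)..h, ‖f τ‖) + h⁻¹ * (∫ τ in (0:ℝ)..h, ‖f τ‖) + F (t + h))
      (nhdsWithin 0 (Ioi 0)) (nhds (F t)) := by
    have := (hP0.add hP0).add hF
    simpa using this
  refine le_of_tendsto_of_tendsto hLHS hRHS ?_
  filter_upwards [self_mem_nhdsWithin] with h hh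
  exact key h (mem_Ioi.1 hh)
end

section
/- Suppose f : [0,∞) → H is continuously differentiable with f(0) = 0, and let u be the strong solution of (ι∘u)'' = A u + f(t) with u(0) = 0, (ι∘u)'(0) = 0. Then for every t ≥ 0 one has ‖A u(t)‖_H ≤ 2 ∫₀^t ‖ḟ(τ)‖_H dτ, where ḟ denotes the H-valued derivative of f. -/
open Set MeasureTheory intervalIntegral Filter

lemma sqrt_add_le' (x ε : ℝ) (hx : 0 ≤ x) (hε : 0 ≤ ε) :
    Real.sqrt (x + ε^2) ≤ Real.sqrt x + ε := by
  have h : x + ε^2 ≤ (Real.sqrt x + ε)^2 := by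
    have h1 : Real.sqrt x ^ 2 = x := Real.sq_sqrt hx
    nlinarith [Real.sqrt_nonneg x]
  calc Real.sqrt (x + ε^2) ≤ Real.sqrt ((Real.sqrt x + ε)^2) := Real.sqrt_le_sqrt h
  _ = Real.sqrt x + ε := Real.sqrt_sq (by have := Real.sqrt_nonneg x; linarith)

lemma sqrt_sq_add_sq_le (x y : ℝ) (hx : 0 ≤ x) (hy : 0 ≤ y) :
    Real.sqrt (x^2 + y^2) ≤ x + y := by
  calc Real.sqrt (x^2 + y^2) ≤ Real.sqrt ((x + y)^2) := Real.sqrt_le_sqrt (by nlinarith)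
  _ = x + y := Real.sqrt_sq (by linarith)

lemma tendsto_right_diff_quot {E : Type*} [NormedAddCommGroup E] [NormedSpace ℝ E]
    {g : ℝ → E} {d : E} {t : ℝ} (ht : 0 ≤ t)
    (hg : HasDerivWithinAt g d (Ici 0) t) :
    Filter.Tendsto (fun h : ℝ => h⁻¹ • (g (t + h) - g t)) (nhdsWithin 0 (Ioi 0)) (nhds d) := by
  rw [hasDerivWithinAt_iff_tendsto_slope] at hg
  have h1 : Filter.Tendsto (slope g t) (nhdsWithin t (Ioi t)) (nhds d) :=
    hg.mono_left (nhdsWithin_mono t (fun x hx => by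
      have hx' : t < x := mem_Ioi.mp hx
      refine ⟨le_trans ht hx'.le, ?_⟩
      simp only [mem_singleton_iff]
      exact ne_of_gt hx'))
  have h2 : Filter.Tendsto (fun h : ℝ => t + h) (nhdsWithin 0 (Ioi 0)) (nhdsWithin t (Ioi t)) := by
    apply tendsto_nhdsWithin_of_tendsto_nhds_of_eventually_within
    · exact ((continuous_const.add continuous_id).tendsto' 0 t (by simp)).mono_left
        nhdsWithin_le_nhds
    · exact eventually_nhdsWithin_of_forall (fun x hx => by
        simp only [mem_Ioi] at hx ⊢; linarith)
  have h3 := h1.comp h2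
  apply h3.congr
  intro h
  simp [Function.comp, slope_def_module, add_sub_cancel_left]
lemma gronwall_sqrt {ψ ψ' g : ℝ → ℝ} {t : ℝ} (ht : 0 ≤ t)
    (hψc : ContinuousOn ψ (Icc 0 t))
    (hψ0 : ∀ s, 0 ≤ ψ s)
    (hgc : ContinuousOn g (Ici 0))
    (hg0 : ∀ s, 0 ≤ g s)
    (hd : ∀ s ∈ Ioo (0:ℝ) t, HasDerivAt ψ (ψ' s) s)
    (hb : ∀ s ∈ Ioo (0:ℝ) t, ψ' s ≤ 2 * g s * Real.sqrt (ψ s)) :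
    Real.sqrt (ψ t) ≤ Real.sqrt (ψ 0) + ∫ τ in (0:ℝ)..t, g τ := by
  have hgint : IntegrableOn g (uIcc 0 t) := by
    refine (hgc.mono ?_).integrableOn_compact isCompact_uIcc
    rw [uIcc_of_le ht]; exact Icc_subset_Ici_self
  have hGc : ContinuousOn (fun x => ∫ τ in (0:ℝ)..x, g τ) (Icc 0 t) := by
    simpa [uIcc_of_le ht] using intervalIntegral.continuousOn_primitive_interval hgint
  rw [add_comm]
  refine le_of_forall_pos_le_add fun ε hε => ?_
  rw [show (∫ τ in (0:ℝ)..t, g τ) + Real.sqrt (ψ 0) + ε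
      = (Real.sqrt (ψ 0) + ε) + ∫ τ in (0:ℝ)..t, g τ by ring]
  -- key: φ is antitone on Icc 0 t
  set φ : ℝ → ℝ := fun s => Real.sqrt (ψ s + ε^2) - ∫ τ in (0:ℝ)..s, g τ with hφ
  have key : φ t ≤ φ 0 := by
    have hanti : AntitoneOn φ (Icc 0 t) := by
      have hder : ∀ s ∈ Ioo (0:ℝ) t, HasDerivAt φ
          (ψ' s / (2 * Real.sqrt (ψ s + ε^2)) - g s) s := by
        intro s hs
        have h1 : HasDerivAt (fun s => Real.sqrt (ψ s + ε^2))
            (ψ' s / (2 * Real.sqrt (ψ s + ε^2))) s := by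
          have := (Real.hasDerivAt_sqrt (x := ψ s + ε^2) (ne_of_gt (by have := hψ0 s; positivity))).comp s
            ((hd s hs).add_const (ε^2))
          simpa [div_eq_inv_mul, mul_comm, Function.comp_def] using this
        have h2 : HasDerivAt (fun x => ∫ τ in (0:ℝ)..x, g τ) (g s) s := by
          refine intervalIntegral.integral_hasDerivAt_right
            ((hgc.mono ?_).intervalIntegrable) ?_ ?_
          · rw [uIcc_of_le hs.1.le]; exact Icc_subset_Ici_self
          · exact ContinuousOn.stronglyMeasurableAtFilter isOpen_Ioi
              (hgc.mono Ioi_subset_Ici_self) s hs.1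
          · exact (hgc.mono Ioi_subset_Ici_self).continuousAt (Ioi_mem_nhds hs.1)
        exact h1.sub h2
      refine antitoneOn_of_deriv_nonpos (convex_Icc 0 t) ?_ ?_ ?_
      · refine ContinuousOn.sub ?_ hGc
        exact (hψc.add continuousOn_const).sqrt
      · intro s hs
        rw [interior_Icc] at hs
        exact (hder s hs).differentiableAt.differentiableWithinAt
      · intro s hs
        rw [interior_Icc] at hs
        rw [(hder s hs).deriv]
        have hsq : Real.sqrt (ψ s) ≤ Real.sqrt (ψ s + ε^2) :=
          Real.sqrt_le_sqrt (by nlinarith)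
        have hpos : 0 < Real.sqrt (ψ s + ε^2) := Real.sqrt_pos.2 (by have := hψ0 s; positivity)
        have hpos2 : (0:ℝ) < 2 * Real.sqrt (ψ s + ε^2) := by linarith [hpos]
        have : ψ' s ≤ 2 * g s * Real.sqrt (ψ s + ε^2) := by
          calc ψ' s ≤ 2 * g s * Real.sqrt (ψ s) := hb s hs
          _ ≤ 2 * g s * Real.sqrt (ψ s + ε^2) := by
              apply mul_le_mul_of_nonneg_left hsq (by have := hg0 s; positivity)
        rw [sub_nonpos, div_le_iff₀ hpos2]
        linarith [this]
    exact hanti (left_mem_Icc.2 ht) (right_mem_Icc.2 ht) ht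
  have h0 : φ 0 = Real.sqrt (ψ 0 + ε^2) := by simp [hφ]
  have h1 : Real.sqrt (ψ t) ≤ Real.sqrt (ψ t + ε^2) :=
    Real.sqrt_le_sqrt (by nlinarith)
  have h2 : Real.sqrt (ψ 0 + ε^2) ≤ Real.sqrt (ψ 0) + ε := sqrt_add_le' _ _ (hψ0 0) hε.le
  have := key
  rw [h0] at this
  simp only [hφ] at this
  linarith

lemma shift_contOn {E : Type*} [NormedAddCommGroup E] {c : ℝ → E} {h : ℝ} (hh : 0 ≤ h)
    (hc : ContinuousOn c (Ici 0)) : ContinuousOn (fun s => c (s + h)) (Ici 0) :=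
  hc.comp ((continuous_id.add continuous_const).continuousOn)
    (fun x hx => by simp only [mem_Ici] at hx ⊢; linarith)


set_option maxHeartbeats 1000000 in
/-- If f : [0,∞) → H is C¹ with f(0) = 0, the strong solution satisfies
‖A u(t)‖_H ≤ 2 ∫₀ᵗ ‖ḟ(τ)‖_H dτ for all t ≥ 0. -/
theorem stmt7 {H V : Type*} [NormedAddCommGroup H] [InnerProductSpace ℝ H] [CompleteSpace H]
    [NormedAddCommGroup V] [InnerProductSpace ℝ V] [CompleteSpace V]
    (ι : V →L[ℝ] H) (hinj : Function.Injective ι) (hcomp : IsCompactOperator ι)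
    (hdense : DenseRange ι)
    (C_T : ℝ) (hCT : 0 < C_T) (hbd : ∀ v : V, ‖ι v‖ ≤ C_T * ‖v‖)
    (D : Submodule ℝ V) (A : D →ₗ[ℝ] H)
    (hGreen : ∀ (w : D) (v : V), (inner ℝ (A w) (ι v) : ℝ) + (inner ℝ ((w : V)) v : ℝ) = 0)
    (hSurj : ∀ h : H, ∃ w : D, ι ((w : V)) - A w = h)
    (f f' : ℝ → H)
    (hf : ∀ t ∈ Ici (0:ℝ), HasDerivWithinAt f (f' t) (Ici 0) t)
    (hf' : ContinuousOn f' (Ici 0))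
    (hf0 : f 0 = 0)
    (sol : StrongSol ι D A f) :
    ∀ t ∈ Ici (0:ℝ), ‖A (sol.u t)‖ ≤ 2 * ∫ τ in (0:ℝ)..t, ‖f' τ‖ := by
  -- basic continuity facts
  have hucont : ContinuousOn (fun s => ((sol.u s : V))) (Ici 0) :=
    fun s hs => (sol.hasDeriv_u s hs).continuousWithinAt
  have hw'cont : ContinuousOn sol.w' (Ici 0) :=
    fun s hs => (sol.hasDeriv_w' s hs).continuousWithinAt
  have hfcont : ContinuousOn f (Ici 0) := fun s hs => (hf s hs).continuousWithinAt
  -- w' = ι ∘ u'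
  have hw'eq : ∀ s ∈ Ici (0:ℝ), sol.w' s = ι (sol.u' s) := by
    intro s hs
    have h1 : HasDerivWithinAt (fun s => ι ((sol.u s : V))) (ι (sol.u' s)) (Ici 0) s :=
      ι.hasFDerivAt.comp_hasDerivWithinAt s (sol.hasDeriv_u s hs)
    rw [← (sol.hasDeriv_w s hs).derivWithin (uniqueDiffOn_Ici 0 s hs),
        ← h1.derivWithin (uniqueDiffOn_Ici 0 s hs)]
  have hu'0 : sol.u' 0 = 0 := by
    apply hinj
    rw [← hw'eq 0 self_mem_Ici, sol.init_w', map_zero]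
  have hu0 : sol.u 0 = 0 := Subtype.coe_injective (by simpa using sol.init_u)
  have hw''0 : sol.w'' 0 = 0 := by
    rw [sol.eqn 0 self_mem_Ici, hu0, map_zero, hf0, add_zero]
  -- the primitive F of ‖f'‖
  set F : ℝ → ℝ := fun x => ∫ τ in (0:ℝ)..x, ‖f' τ‖ with hFdef
  have hnf'cont : ContinuousOn (fun τ => ‖f' τ‖) (Ici 0) := hf'.norm
  have huIcc : ∀ a b : ℝ, 0 ≤ a → 0 ≤ b → uIcc a b ⊆ Ici 0 :=
    fun a b ha hb x hx => le_trans (le_min ha hb) hx.1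
  have hint : ∀ a b : ℝ, 0 ≤ a → 0 ≤ b →
      IntervalIntegrable (fun τ => ‖f' τ‖) volume a b :=
    fun a b ha hb => (hnf'cont.mono (huIcc a b ha hb)).intervalIntegrable
  have hFTC : ∀ a b : ℝ, 0 ≤ a → a ≤ b → f b - f a = ∫ τ in a..b, f' τ := by
    intro a b ha hab
    symm
    apply intervalIntegral.integral_eq_sub_of_hasDeriv_right_of_le hab
      (hfcont.mono (fun x hx => le_trans ha hx.1))
      (fun x hx => ?_) ((hf'.mono (huIcc a b ha (ha.trans hab))).intervalIntegrable)
    have hx0 : (0:ℝ) < x := lt_of_le_of_lt ha hx.1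
    exact (((hf x hx0.le).hasDerivAt (Ici_mem_nhds hx0)).hasDerivWithinAt)
  have hFdiff : ∀ a b : ℝ, 0 ≤ a → a ≤ b → F b - F a = ∫ τ in a..b, ‖f' τ‖ := by
    intro a b ha hab
    rw [hFdef]
    exact intervalIntegral.integral_interval_sub_left (hint 0 b le_rfl (ha.trans hab))
      (hint 0 a le_rfl ha)
  have hnormFTC : ∀ a b : ℝ, 0 ≤ a → a ≤ b → ‖f b - f a‖ ≤ F b - F a := by
    intro a b ha hab
    rw [hFTC a b ha hab, hFdiff a b ha hab]
    exact intervalIntegral.norm_integral_le_integral_norm hab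
  have hFmono : ∀ a b : ℝ, 0 ≤ a → a ≤ b → F a ≤ F b := by
    intro a b ha hab
    have h1 := hFdiff a b ha hab
    have h2 : 0 ≤ ∫ τ in a..b, ‖f' τ‖ :=
      intervalIntegral.integral_nonneg hab (fun x _ => norm_nonneg _)
    linarith
  have hF0 : F 0 = 0 := by simp [hFdef]
  have hFnonneg : ∀ b : ℝ, 0 ≤ b → 0 ≤ F b := fun b hb => hF0 ▸ hFmono 0 b le_rfl hb
  have hFcont : ∀ X : ℝ, 0 ≤ X → ContinuousOn F (Icc 0 X) := by
    intro X hX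
    have h1 : IntegrableOn (fun τ => ‖f' τ‖) (uIcc 0 X) volume := by
      rw [uIcc_of_le hX]
      exact (hnf'cont.mono Icc_subset_Ici_self).integrableOn_compact isCompact_Icc
    have := intervalIntegral.continuousOn_primitive_interval h1
    rwa [uIcc_of_le hX] at this
  -- main argument
  intro t ht
  rw [mem_Ici] at ht
  -- Step A: the difference-quotient energy estimate
  have hkey : ∀ h : ℝ, 0 < h →
      ‖sol.w' (t + h) - sol.w' t‖ ≤ ‖sol.w' h‖ + ‖((sol.u h : V))‖ + h * F (t + h) := by
    intro h hh
    set b_ : ℝ → H := fun s => sol.w' (s + h) - sol.w' s with hb_def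
    set a_ : ℝ → V := fun s => ((sol.u (s + h) : V)) - ((sol.u s : V)) with ha_def
    set ψ : ℝ → ℝ := fun s => ‖b_ s‖ ^ 2 + ‖a_ s‖ ^ 2 with hψdef
    set g : ℝ → ℝ := fun s => ‖f (s + h) - f s‖ with hgdef
    set ψ' : ℝ → ℝ := fun s => 2 * (inner ℝ (f (s + h) - f s) (b_ s) : ℝ) with hψ'def
    have hbcont : ContinuousOn b_ (Ici 0) := by
      rw [hb_def]; exact (shift_contOn hh.le hw'cont).sub hw'cont
    have hacont : ContinuousOn a_ (Ici 0) := by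
      rw [ha_def]; exact (shift_contOn hh.le hucont).sub hucont
    have hψcont : ContinuousOn ψ (Icc 0 t) := by
      rw [hψdef]
      exact (((hbcont.norm.pow 2).add (hacont.norm.pow 2)).mono Icc_subset_Ici_self)
    have hgcont : ContinuousOn g (Ici 0) := by
      rw [hgdef]; exact ((shift_contOn hh.le hfcont).sub hfcont).norm
    -- derivatives at interior points
    have hDu : ∀ x : ℝ, 0 < x → HasDerivAt (fun s => ((sol.u s : V))) (sol.u' x) x :=
      fun x hx => (sol.hasDeriv_u x hx.le).hasDerivAt (Ici_mem_nhds hx)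
    have hDw' : ∀ x : ℝ, 0 < x → HasDerivAt sol.w' (sol.w'' x) x :=
      fun x hx => (sol.hasDeriv_w' x hx.le).hasDerivAt (Ici_mem_nhds hx)
    have hder : ∀ s ∈ Ioo (0:ℝ) t, HasDerivAt ψ (ψ' s) s := by
      intro s hs
      have hs0 : (0:ℝ) < s := hs.1
      have hsh : (0:ℝ) < s + h := by linarith
      have hDb : HasDerivAt b_ (sol.w'' (s + h) - sol.w'' s) s :=
        ((hDw' (s + h) hsh).comp_add_const s h).sub (hDw' s hs0)
      have hDa : HasDerivAt a_ (sol.u' (s + h) - sol.u' s) s :=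
        ((hDu (s + h) hsh).comp_add_const s h).sub (hDu s hs0)
      have hinner : HasDerivAt (fun s => (inner ℝ (b_ s) (b_ s) : ℝ) + (inner ℝ (a_ s) (a_ s) : ℝ))
          (((inner ℝ (b_ s) (sol.w'' (s + h) - sol.w'' s) : ℝ)
            + (inner ℝ (sol.w'' (s + h) - sol.w'' s) (b_ s) : ℝ))
           + ((inner ℝ (a_ s) (sol.u' (s + h) - sol.u' s) : ℝ)
            + (inner ℝ (sol.u' (s + h) - sol.u' s) (a_ s) : ℝ))) s :=
        (HasDerivAt.inner ℝ hDb hDb).add (HasDerivAt.inner ℝ hDa hDa)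
      have hfun : (fun s => (inner ℝ (b_ s) (b_ s) : ℝ) + (inner ℝ (a_ s) (a_ s) : ℝ)) = ψ := by
        funext x
        rw [hψdef]
        simp [real_inner_self_eq_norm_sq]
      rw [hfun] at hinner
      -- identify the derivative value
      have hval : ((inner ℝ (b_ s) (sol.w'' (s + h) - sol.w'' s) : ℝ)
            + (inner ℝ (sol.w'' (s + h) - sol.w'' s) (b_ s) : ℝ))
           + ((inner ℝ (a_ s) (sol.u' (s + h) - sol.u' s) : ℝ)
            + (inner ℝ (sol.u' (s + h) - sol.u' s) (a_ s) : ℝ)) = ψ' s := by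
        set Δu : D := sol.u (s + h) - sol.u s with hΔu
        set Δu' : V := sol.u' (s + h) - sol.u' s with hΔu'
        have e1 : sol.w'' (s + h) - sol.w'' s = A Δu + (f (s + h) - f s) := by
          rw [sol.eqn (s + h) (by simp only [mem_Ici]; linarith),
              sol.eqn s (by simp only [mem_Ici]; linarith), hΔu, map_sub]
          abel
        have e2 : b_ s = ι Δu' := by
          rw [hb_def, hΔu', map_sub, ← hw'eq (s + h) (by simp only [mem_Ici]; linarith),
              ← hw'eq s (by simp only [mem_Ici]; linarith)]
        have e3 : ((Δu : V)) = a_ s := by rw [hΔu, ha_def]; simp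
        have hg := hGreen Δu Δu'
        rw [e3] at hg
        rw [e1, hψ'def, e2]
        simp only [inner_add_left, inner_add_right]
        have c1 : (inner ℝ (ι Δu') (A Δu) : ℝ) = (inner ℝ (A Δu) (ι Δu') : ℝ) := real_inner_comm _ _
        have c2 : (inner ℝ (ι Δu') (f (s+h) - f s) : ℝ)
            = (inner ℝ (f (s+h) - f s) (ι Δu') : ℝ) := real_inner_comm _ _
        have c3 : (inner ℝ (a_ s) Δu' : ℝ) = (inner ℝ Δu' (a_ s) : ℝ) := real_inner_comm _ _
        have c4 : (inner ℝ (f (s + h) - f s) (b_ s) : ℝ)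
            = (inner ℝ (f (s + h) - f s) (ι Δu') : ℝ) := by rw [e2]
        linarith [hg, c1, c2, c3, c4]
      rw [hval] at hinner
      exact hinner
    have hbnd : ∀ s ∈ Ioo (0:ℝ) t, ψ' s ≤ 2 * g s * Real.sqrt (ψ s) := by
      intro s hs
      have h1 : (inner ℝ (f (s + h) - f s) (b_ s) : ℝ) ≤ ‖f (s + h) - f s‖ * ‖b_ s‖ :=
        real_inner_le_norm _ _
      have h2 : ‖b_ s‖ ≤ Real.sqrt (ψ s) := by
        rw [show ‖b_ s‖ = Real.sqrt (‖b_ s‖^2) from (Real.sqrt_sq (norm_nonneg _)).symm]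
        exact Real.sqrt_le_sqrt (by simp only [hψdef]; nlinarith [sq_nonneg ‖a_ s‖])
      have h3 : (0:ℝ) ≤ ‖f (s + h) - f s‖ := norm_nonneg _
      simp only [hψ'def, hgdef]
      nlinarith [h1, h2, h3, norm_nonneg (b_ s), Real.sqrt_nonneg (ψ s)]
    have hgron := gronwall_sqrt ht hψcont (fun s => by simp only [hψdef]; positivity)
      hgcont (fun s => norm_nonneg _) hder hbnd
    -- bound the three resulting terms
    have hb_t : ‖b_ t‖ ≤ Real.sqrt (ψ t) := by
      rw [show ‖b_ t‖ = Real.sqrt (‖b_ t‖^2) from (Real.sqrt_sq (norm_nonneg _)).symm]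
      exact Real.sqrt_le_sqrt (by simp only [hψdef]; nlinarith [sq_nonneg ‖a_ t‖])
    have hψ0 : Real.sqrt (ψ 0) ≤ ‖sol.w' h‖ + ‖((sol.u h : V))‖ := by
      have e1 : b_ 0 = sol.w' h := by rw [hb_def]; simp [sol.init_w']
      have e2 : a_ 0 = ((sol.u h : V)) := by rw [ha_def]; simp [sol.init_u]
      simp only [hψdef, e1, e2]
      exact sqrt_sq_add_sq_le _ _ (norm_nonneg _) (norm_nonneg _)
    -- bound the integral of g
    have hIg : (∫ s in (0:ℝ)..t, g s) ≤ h * F (t + h) := by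
      have hFi : ∀ a b : ℝ, 0 ≤ a → 0 ≤ b → a ≤ t + h → b ≤ t + h →
          IntervalIntegrable F volume a b := by
        intro a b ha hb hab hbb
        apply ContinuousOn.intervalIntegrable
        apply (hFcont (t + h) (by linarith)).mono
        intro x hx
        exact ⟨le_trans (le_min ha hb) hx.1, le_trans hx.2 (max_le hab hbb)⟩
      have hshiftF : ContinuousOn (fun s => F (s + h)) (Icc 0 t) := by
        apply (hFcont (t + h) (by linarith)).comp (continuous_add_right h).continuousOn
        intro x hx
        have hm : x + h ∈ Icc (0:ℝ) (t + h) := ⟨by linarith [hx.1], by linarith [hx.2]⟩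
        exact hm
      have hshift_int : IntervalIntegrable (fun s => F (s + h)) volume 0 t := by
        apply ContinuousOn.intervalIntegrable
        rwa [uIcc_of_le ht]
      have hFint0t : IntervalIntegrable F volume 0 t :=
        hFi 0 t le_rfl ht (by linarith) (by linarith)
      have hgint2 : IntervalIntegrable g volume 0 t := by
        apply (hgcont.mono (huIcc 0 t le_rfl ht)).intervalIntegrable
      calc (∫ s in (0:ℝ)..t, g s) ≤ ∫ s in (0:ℝ)..t, (F (s + h) - F s) := by
            apply intervalIntegral.integral_mono_on ht hgint2 (hshift_int.sub hFint0t)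
            intro s hs
            have := hnormFTC s (s + h) hs.1 (by linarith)
            rw [hgdef]
            linarith
        _ = (∫ s in (0:ℝ)..t, F (s + h)) - ∫ s in (0:ℝ)..t, F s :=
            intervalIntegral.integral_sub hshift_int hFint0t
        _ = (∫ s in h..(t + h), F s) - ∫ s in (0:ℝ)..t, F s := by
            rw [intervalIntegral.integral_comp_add_right F h]; norm_num
        _ = (∫ s in t..(t + h), F s) - ∫ s in (0:ℝ)..h, F s := by
            have e1 : (∫ s in h..t, F s) + ∫ s in t..(t+h), F s = ∫ s in h..(t+h), F s :=
              intervalIntegral.integral_add_adjacent_intervals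
                (hFi h t hh.le ht (by linarith) (by linarith))
                (hFi t (t+h) ht (by linarith) (by linarith) le_rfl)
            have e2 : (∫ s in (0:ℝ)..h, F s) + ∫ s in h..t, F s = ∫ s in (0:ℝ)..t, F s :=
              intervalIntegral.integral_add_adjacent_intervals
                (hFi 0 h le_rfl hh.le (by linarith) (by linarith))
                (hFi h t hh.le ht (by linarith) (by linarith))
            linarith
        _ ≤ h * F (t + h) - 0 := by
            have hA : (∫ s in t..(t + h), F s) ≤ h * F (t + h) := by
              have h1 : (∫ s in t..(t + h), F s) ≤ ∫ _s in t..(t + h), F (t + h) :=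
                intervalIntegral.integral_mono_on (by linarith)
                  (hFi t (t+h) ht (by linarith) (by linarith) le_rfl)
                  intervalIntegrable_const
                  (fun x hx => hFmono x (t + h) (le_trans ht hx.1) hx.2)
              have h2 : (∫ _s in t..(t + h), F (t + h)) = h * F (t + h) := by
                rw [intervalIntegral.integral_const, smul_eq_mul]
                have e : t + h - t = h := by ring
                rw [e]
              linarith
            have hB : (0:ℝ) ≤ ∫ s in (0:ℝ)..h, F s :=
              intervalIntegral.integral_nonneg hh.le (fun x hx => hFnonneg x hx.1)
            linarith
        _ = h * F (t + h) := by ring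
    have := hb_t.trans (hgron.trans (add_le_add hψ0 hIg))
    rw [hb_def] at this
    linarith [this]
  -- Step B: pass to the limit h → 0⁺
  have T1 : Tendsto (fun h : ℝ => ‖h⁻¹ • (sol.w' (t + h) - sol.w' t)‖)
      (nhdsWithin 0 (Ioi 0)) (nhds ‖sol.w'' t‖) :=
    (tendsto_right_diff_quot ht (sol.hasDeriv_w' t ht)).norm
  have T2 : Tendsto (fun h : ℝ => ‖h⁻¹ • sol.w' h‖) (nhdsWithin 0 (Ioi 0)) (nhds 0) := by
    have := (tendsto_right_diff_quot le_rfl (sol.hasDeriv_w' 0 self_mem_Ici)).norm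
    rw [hw''0, norm_zero] at this
    apply this.congr
    intro h
    simp [sol.init_w']
  have T3 : Tendsto (fun h : ℝ => ‖h⁻¹ • ((sol.u h : V))‖) (nhdsWithin 0 (Ioi 0)) (nhds 0) := by
    have := (tendsto_right_diff_quot le_rfl (sol.hasDeriv_u 0 self_mem_Ici)).norm
    rw [hu'0, norm_zero] at this
    apply this.congr
    intro h
    simp [sol.init_u]
  have T4 : Tendsto (fun h : ℝ => F (t + h)) (nhdsWithin 0 (Ioi 0)) (nhds (F t)) := by
    obtain ⟨C, hC⟩ : ∃ C, ∀ x ∈ Icc t (t + 1), ‖f' x‖ ≤ C := by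
      rcases (isCompact_Icc (a := t) (b := t + 1)).exists_bound_of_continuousOn
        (hf'.mono (fun x hx => le_trans ht hx.1)) with ⟨C, hC⟩
      exact ⟨C, hC⟩
    have hub : ∀ h ∈ Ioc (0:ℝ) 1, F (t + h) ≤ F t + C * h := by
      intro h hh
      have h1 := hFdiff t (t + h) ht (by linarith [hh.1])
      have h2 : (∫ τ in t..(t + h), ‖f' τ‖) ≤ ∫ _τ in t..(t + h), C := by
        apply intervalIntegral.integral_mono_on (by linarith [hh.1])
          (hint t (t + h) ht (by linarith [hh.1])) intervalIntegrable_const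
        intro x hx
        exact hC x ⟨hx.1, by linarith [hx.2, hh.2]⟩
      rw [intervalIntegral.integral_const] at h2
      simp only [smul_eq_mul] at h2
      have : (t + h - t) * C = C * h := by ring
      rw [this] at h2
      linarith
    have hlb : ∀ h ∈ Ioi (0:ℝ), F t ≤ F (t + h) :=
      fun h hh => hFmono t (t + h) ht (by linarith [mem_Ioi.mp hh])
    apply tendsto_of_tendsto_of_tendsto_of_le_of_le' tendsto_const_nhds
      (f := fun h : ℝ => F (t + h)) (g := fun _ : ℝ => F t) (h := fun h : ℝ => F t + C * h)
    · have : Tendsto (fun h : ℝ => F t + C * h) (nhds 0) (nhds (F t + C * 0)) :=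
        (continuous_const.add (continuous_const.mul continuous_id)).tendsto' 0 _ rfl
      simpa using this.mono_left nhdsWithin_le_nhds
    · exact eventually_nhdsWithin_of_forall hlb
    · have hmem : Ioc (0:ℝ) 1 ∈ nhdsWithin (0:ℝ) (Ioi 0) :=
        Ioc_mem_nhdsGT one_pos
      exact Filter.mem_of_superset hmem (fun h hh => hub h hh)
  have hw''le : ‖sol.w'' t‖ ≤ F t := by
    have Trhs : Tendsto (fun h : ℝ => ‖h⁻¹ • sol.w' h‖ + ‖h⁻¹ • ((sol.u h : V))‖ + F (t + h))
        (nhdsWithin 0 (Ioi 0)) (nhds (F t)) := by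
      have := (T2.add T3).add T4
      simpa using this
    apply le_of_tendsto_of_tendsto T1 Trhs
    apply eventually_nhdsWithin_of_forall
    intro h hh
    have hh' : (0:ℝ) < h := mem_Ioi.mp hh
    have hk := hkey h hh'
    have e1 : ‖h⁻¹ • (sol.w' (t + h) - sol.w' t)‖ = h⁻¹ * ‖sol.w' (t + h) - sol.w' t‖ := by
      rw [norm_smul, Real.norm_eq_abs, abs_of_pos (inv_pos.2 hh')]
    have e2 : ‖h⁻¹ • sol.w' h‖ = h⁻¹ * ‖sol.w' h‖ := by
      rw [norm_smul, Real.norm_eq_abs, abs_of_pos (inv_pos.2 hh')]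
    have e3 : ‖h⁻¹ • ((sol.u h : V))‖ = h⁻¹ * ‖((sol.u h : V))‖ := by
      rw [norm_smul, Real.norm_eq_abs, abs_of_pos (inv_pos.2 hh')]
    have hinv : (0:ℝ) ≤ h⁻¹ := (inv_pos.2 hh').le
    have hih : h⁻¹ * h = 1 := inv_mul_cancel₀ hh'.ne'
    simp only [e1, e2, e3]
    calc h⁻¹ * ‖sol.w' (t + h) - sol.w' t‖
        ≤ h⁻¹ * (‖sol.w' h‖ + ‖((sol.u h : V))‖ + h * F (t + h)) :=
          mul_le_mul_of_nonneg_left hk hinv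
      _ = h⁻¹ * ‖sol.w' h‖ + h⁻¹ * ‖((sol.u h : V))‖ + (h⁻¹ * h) * F (t + h) := by ring
      _ = h⁻¹ * ‖sol.w' h‖ + h⁻¹ * ‖((sol.u h : V))‖ + F (t + h) := by rw [hih]; ring
  have hft : ‖f t‖ ≤ F t := by
    have := hnormFTC 0 t le_rfl ht
    rw [hf0, hF0] at this
    simpa using this
  have heq : A (sol.u t) = sol.w'' t - f t := by
    rw [sol.eqn t ht]; abel
  calc ‖A (sol.u t)‖ = ‖sol.w'' t - f t‖ := by rw [heq]
    _ ≤ ‖sol.w'' t‖ + ‖f t‖ := norm_sub_le _ _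
    _ ≤ F t + F t := add_le_add hw''le hft
    _ = 2 * F t := by ring
end

section
/- Suppose f : [0,∞) → H is continuously differentiable with f(0) = 0, and let u be the strong solution of (ι∘u)'' = A u + f(t) with u(0) = 0, (ι∘u)'(0) = 0. Then for every t ≥ 0 one has ‖u(t)‖_V ≤ ∫₀^t ‖f(τ)‖_H dτ and ‖(ι∘u)'(t)‖_H ≤ ∫₀^t ‖f(τ)‖_H dτ. -/
open Set

/-- If f : [0,∞) → H is C¹ with f(0) = 0, the strong solution satisfies
‖u(t)‖_V ≤ ∫₀ᵗ ‖f(τ)‖_H dτ and ‖(ι∘u)'(t)‖_H ≤ ∫₀ᵗ ‖f(τ)‖_H dτ for all t ≥ 0. -/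
theorem stmt8 {H V : Type*} [NormedAddCommGroup H] [InnerProductSpace ℝ H] [CompleteSpace H]
    [NormedAddCommGroup V] [InnerProductSpace ℝ V] [CompleteSpace V]
    (ι : V →L[ℝ] H) (hinj : Function.Injective ι) (hcomp : IsCompactOperator ι)
    (hdense : DenseRange ι)
    (C_T : ℝ) (hCT : 0 < C_T) (hbd : ∀ v : V, ‖ι v‖ ≤ C_T * ‖v‖)
    (D : Submodule ℝ V) (A : D →ₗ[ℝ] H)
    (hGreen : ∀ (w : D) (v : V), (inner ℝ (A w) (ι v) : ℝ) + (inner ℝ ((w : V)) v : ℝ) = 0)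
    (hSurj : ∀ h : H, ∃ w : D, ι ((w : V)) - A w = h)
    (f f' : ℝ → H)
    (hf : ∀ t ∈ Ici (0:ℝ), HasDerivWithinAt f (f' t) (Ici 0) t)
    (hf' : ContinuousOn f' (Ici 0))
    (hf0 : f 0 = 0)
    (sol : StrongSol ι D A f) :
    ∀ t ∈ Ici (0:ℝ),
      ‖((sol.u t : V))‖ ≤ (∫ τ in (0:ℝ)..t, ‖f τ‖) ∧
      ‖sol.w' t‖ ≤ ∫ τ in (0:ℝ)..t, ‖f τ‖ := by
  have hfc : ContinuousOn f (Ici 0) := fun s hs => (hf s hs).continuousWithinAt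
  -- global continuous extension of ‖f‖
  set φ : ℝ → ℝ := fun s => ‖f (max s 0)‖ with hφdef
  have hφc : Continuous φ := by
    have h1 : Continuous fun s : ℝ => max s 0 := continuous_id.max continuous_const
    have h2 : ContinuousOn (fun s : ℝ => f (max s 0)) univ :=
      hfc.comp h1.continuousOn (fun s _ => mem_Ici.mpr (le_max_right _ _))
    exact (continuousOn_univ.mp h2).norm
  set G : ℝ → ℝ := fun s => ∫ τ in (0:ℝ)..s, φ τ with hGdef
  have hG : ∀ s : ℝ, HasDerivAt G (φ s) s := fun s =>
    (hφc.integral_hasStrictDerivAt 0 s).hasDerivAt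
  have hGeq : ∀ s ∈ Ici (0:ℝ), G s = ∫ τ in (0:ℝ)..s, ‖f τ‖ := by
    intro s hs
    refine intervalIntegral.integral_congr (fun τ hτ => ?_)
    rw [uIcc_of_le hs] at hτ
    simp [hφdef, max_eq_left hτ.1]
  -- w' = ι ∘ u'
  have hw'ι : ∀ s ∈ Ici (0:ℝ), sol.w' s = ι (sol.u' s) := by
    intro s hs
    have h1 : HasDerivWithinAt (fun x => ι ((sol.u x : V))) (ι (sol.u' s)) (Ici 0) s :=
      ι.hasFDerivAt.comp_hasDerivWithinAt s (sol.hasDeriv_u s hs)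
    have hu := uniqueDiffOn_Ici (0:ℝ) s hs
    rw [← (sol.hasDeriv_w s hs).derivWithin hu, ← h1.derivWithin hu]
  -- energy
  set E : ℝ → ℝ := fun s =>
    (inner ℝ ((sol.u s : V)) ((sol.u s : V)) : ℝ) + (inner ℝ (sol.w' s) (sol.w' s) : ℝ) with hEdef
  have hEnonneg : ∀ s, 0 ≤ E s := fun s =>
    add_nonneg real_inner_self_nonneg real_inner_self_nonneg
  have hE0 : E 0 = 0 := by simp [hEdef, sol.init_u, sol.init_w']
  have hE : ∀ s ∈ Ici (0:ℝ),
      HasDerivWithinAt E (2 * (inner ℝ (sol.w' s) (f s) : ℝ)) (Ici 0) s := by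
    intro s hs
    have h1 := (sol.hasDeriv_u s hs).inner ℝ (sol.hasDeriv_u s hs)
    have h2 := (sol.hasDeriv_w' s hs).inner ℝ (sol.hasDeriv_w' s hs)
    have h := h1.add h2
    refine h.congr_deriv ?_
    have hgr := hGreen (sol.u s) (sol.u' s)
    have e1 : (inner ℝ (sol.u' s) ((sol.u s : V)) : ℝ) = inner ℝ ((sol.u s : V)) (sol.u' s) :=
      real_inner_comm _ _
    have e2 : (inner ℝ (sol.w'' s) (sol.w' s) : ℝ) = inner ℝ (sol.w' s) (sol.w'' s) :=
      real_inner_comm _ _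
    have hww : (inner ℝ (sol.w' s) (sol.w'' s) : ℝ)
        = (inner ℝ (sol.w' s) (A (sol.u s)) : ℝ) + (inner ℝ (sol.w' s) (f s) : ℝ) := by
      rw [sol.eqn s hs, inner_add_right]
    have hAu : (inner ℝ (sol.w' s) (A (sol.u s)) : ℝ)
        = -(inner ℝ ((sol.u s : V)) (sol.u' s) : ℝ) := by
      rw [hw'ι s hs, real_inner_comm]
      linarith
    linarith
  -- main ε-estimate
  intro t ht
  have main : ∀ ε > (0:ℝ), Real.sqrt (E t) ≤ G t + ε := by
    intro ε hε
    set g : ℝ → ℝ := fun s => Real.sqrt (E s + ε ^ 2) with hgdef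
    have hpos : ∀ s, 0 < E s + ε ^ 2 := fun s =>
      add_pos_of_nonneg_of_pos (hEnonneg s) (by positivity)
    have hg : ∀ s ∈ Ici (0:ℝ), HasDerivWithinAt g
        ((2 * (inner ℝ (sol.w' s) (f s) : ℝ)) / (2 * Real.sqrt (E s + ε ^ 2))) (Ici 0) s := by
      intro s hs
      exact ((hE s hs).add_const (ε ^ 2)).sqrt (ne_of_gt (hpos s))
    -- derivative bound
    have hder_le : ∀ s ∈ Ici (0:ℝ),
        (2 * (inner ℝ (sol.w' s) (f s) : ℝ)) / (2 * Real.sqrt (E s + ε ^ 2)) ≤ φ s := by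
      intro s hs
      have hsq : 0 < Real.sqrt (E s + ε ^ 2) := Real.sqrt_pos.mpr (hpos s)
      have hw : ‖sol.w' s‖ ≤ Real.sqrt (E s + ε ^ 2) := by
        rw [← Real.sqrt_sq (norm_nonneg (sol.w' s))]
        apply Real.sqrt_le_sqrt
        have : ‖sol.w' s‖ ^ 2 = (inner ℝ (sol.w' s) (sol.w' s) : ℝ) :=
          (real_inner_self_eq_norm_sq _).symm
        have hEeq : E s = (inner ℝ ((sol.u s : V)) ((sol.u s : V)) : ℝ)
            + (inner ℝ (sol.w' s) (sol.w' s) : ℝ) := rfl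
        nlinarith [real_inner_self_nonneg (x := (sol.u s : V)), sq_nonneg ε]
      have hin : (inner ℝ (sol.w' s) (f s) : ℝ) ≤ ‖sol.w' s‖ * ‖f s‖ :=
        real_inner_le_norm _ _
      have hφs : φ s = ‖f s‖ := by simp [hφdef, max_eq_left (mem_Ici.mp hs)]
      rw [hφs, div_le_iff₀ (by positivity)]
      have h1 : ‖sol.w' s‖ * ‖f s‖ ≤ Real.sqrt (E s + ε ^ 2) * ‖f s‖ :=
        mul_le_mul_of_nonneg_right hw (norm_nonneg _)
      nlinarith [norm_nonneg (f s)]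
    -- ψ = G - g is monotone on Ici 0
    set ψ : ℝ → ℝ := fun s => G s - g s with hψdef
    have hψmono : MonotoneOn ψ (Ici 0) := by
      apply monotoneOn_of_hasDerivWithinAt_nonneg (convex_Ici 0)
        (f' := fun s => φ s - (2 * (inner ℝ (sol.w' s) (f s) : ℝ)) / (2 * Real.sqrt (E s + ε ^ 2)))
      · intro s hs
        exact (((hG s).hasDerivWithinAt).sub (hg s hs)).continuousWithinAt
      · intro s hs
        rw [interior_Ici] at hs
        exact ((hG s).hasDerivWithinAt.sub
          ((hg s (mem_Ici.mpr (le_of_lt (mem_Ioi.mp hs)))).mono (by rw [interior_Ici]; exact Ioi_subset_Ici_self)))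
      · intro s hs
        rw [interior_Ici] at hs
        linarith [hder_le s (mem_Ici.mpr (le_of_lt (mem_Ioi.mp hs)))]
    have hψ0 : ψ 0 = -ε := by
      simp [hψdef, hGdef, hgdef, hE0, Real.sqrt_sq hε.le]
    have := hψmono (self_mem_Ici) ht ht
    rw [hψ0] at this
    have hgt : Real.sqrt (E t) ≤ g t :=
      Real.sqrt_le_sqrt (by nlinarith [sq_nonneg ε])
    simp only [hψdef] at this
    linarith
  have hle : Real.sqrt (E t) ≤ G t := le_of_forall_pos_le_add main
  have hGt : G t = ∫ τ in (0:ℝ)..t, ‖f τ‖ := hGeq t ht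
  have hu_le : ‖(sol.u t : V)‖ ≤ Real.sqrt (E t) := by
    rw [← Real.sqrt_sq (norm_nonneg ((sol.u t : V)))]
    apply Real.sqrt_le_sqrt
    have : ‖(sol.u t : V)‖ ^ 2 = (inner ℝ ((sol.u t : V)) ((sol.u t : V)) : ℝ) :=
      (real_inner_self_eq_norm_sq _).symm
    have hEeq : E t = (inner ℝ ((sol.u t : V)) ((sol.u t : V)) : ℝ)
        + (inner ℝ (sol.w' t) (sol.w' t) : ℝ) := rfl
    nlinarith [real_inner_self_nonneg (x := sol.w' t)]
  have hw_le : ‖sol.w' t‖ ≤ Real.sqrt (E t) := by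
    rw [← Real.sqrt_sq (norm_nonneg (sol.w' t))]
    apply Real.sqrt_le_sqrt
    have : ‖sol.w' t‖ ^ 2 = (inner ℝ (sol.w' t) (sol.w' t) : ℝ) :=
      (real_inner_self_eq_norm_sq _).symm
    have hEeq : E t = (inner ℝ ((sol.u t : V)) ((sol.u t : V)) : ℝ)
        + (inner ℝ (sol.w' t) (sol.w' t) : ℝ) := rfl
    nlinarith [real_inner_self_nonneg (x := (sol.u t : V))]
  exact ⟨by rw [← hGt]; linarith, by rw [← hGt]; linarith⟩
end

section
/- There exists a constant C > 0 such that for every time step k with 0 < k ≤ 1 and every complex number s with Re s > 0, the BDF2 symbol satisfies |s_k| ≤ C |s|. -/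
/-- The BDF2 symbol s_k = δ(e^{-sk})/k with δ(ζ) = 3/2 - 2ζ + ζ²/2. -/
noncomputable def bdf2Symbol (k : ℝ) (s : ℂ) : ℂ :=
  (1 / (k : ℂ)) * (3 / 2 - 2 * Complex.exp (-s * k) + (1 / 2) * Complex.exp (-2 * s * k))

lemma aux_one_sub_exp_neg (z : ℂ) (hz : 0 ≤ z.re) :
    ‖1 - Complex.exp (-z)‖ ≤ 3 * ‖z‖ := by
  have habs : ‖Complex.exp (-z)‖ ≤ 1 := by
    rw [Complex.norm_exp]
    exact Real.exp_le_one_iff.mpr (by simpa using neg_nonpos.mpr hz)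
  by_cases h : ‖z‖ ≤ 1
  · have := Complex.norm_exp_sub_one_le (x := -z) (by simpa using h)
    calc ‖1 - Complex.exp (-z)‖ = ‖Complex.exp (-z) - 1‖ :=
          norm_sub_rev _ _
      _ ≤ 2 * ‖-z‖ := this
      _ = 2 * ‖z‖ := by rw [norm_neg]
      _ ≤ 3 * ‖z‖ := by nlinarith [norm_nonneg z]
  · push_neg at h
    calc ‖1 - Complex.exp (-z)‖ ≤
          ‖1‖ + ‖Complex.exp (-z)‖ := norm_sub_le _ _
      _ ≤ 1 + 1 := by simpa using habs
      _ ≤ 3 * ‖z‖ := by nlinarith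

/-- There is a constant C > 0 such that for every time step 0 < k ≤ 1 and every
s ∈ ℂ with Re s > 0, the BDF2 symbol satisfies |s_k| ≤ C |s|. -/
theorem stmt9 :
    ∃ C : ℝ, 0 < C ∧ ∀ k : ℝ, 0 < k → k ≤ 1 → ∀ s : ℂ, 0 < s.re →
      ‖bdf2Symbol k s‖ ≤ C * ‖s‖ := by
  refine ⟨6, by norm_num, fun k hk hk1 s hs => ?_⟩
  set w : ℂ := Complex.exp (-s * k) with hw
  have hwsq : Complex.exp (-2 * s * k) = w * w := by
    rw [hw, ← Complex.exp_add]; ring_nf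
  have hfac : bdf2Symbol k s = (1 / (k : ℂ)) * ((1 - w) * (3 - w) / 2) := by
    rw [bdf2Symbol, hwsq]; ring
  have hzre : 0 ≤ (s * k).re := by
    rw [Complex.mul_re]
    simp [Complex.ofReal_re, Complex.ofReal_im]
    positivity
  have h1 : ‖1 - w‖ ≤ 3 * (‖s‖ * k) := by
    have : (-s * (k:ℂ)) = -(s * k) := by ring
    rw [hw, this]
    have := aux_one_sub_exp_neg (s * k) hzre
    simpa [map_mul, Complex.norm_real, abs_of_pos hk] using this
  have hwa : ‖w‖ ≤ 1 := by
    rw [hw, Complex.norm_exp]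
    have : (-s * (k:ℂ)).re ≤ 0 := by
      have : (-s * (k:ℂ)).re = -(s.re * k) := by
        simp [Complex.mul_re, Complex.ofReal_re, Complex.ofReal_im]
      rw [this]; nlinarith
    simpa using Real.exp_le_one_iff.mpr this
  have h3 : ‖3 - w‖ ≤ 4 := by
    calc ‖3 - w‖ ≤ ‖3‖ + ‖w‖ := norm_sub_le _ _
      _ ≤ 3 + 1 := by simp; exact hwa
      _ = 4 := by norm_num
  rw [hfac]
  have h2 : ‖(1 / (k : ℂ)) * ((1 - w) * (3 - w) / 2)‖ =
      (1 / k) * (‖1 - w‖ * ‖3 - w‖ / 2) := by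
    simp [map_mul, map_div₀, Complex.norm_real, abs_of_pos hk, Complex.norm_two]
  rw [h2]
  have hA := norm_nonneg (1 - w)
  have hB := norm_nonneg (3 - w)
  calc (1 / k) * (‖1 - w‖ * ‖3 - w‖ / 2)
      ≤ (1 / k) * (3 * (‖s‖ * k) * 4 / 2) := by
        apply mul_le_mul_of_nonneg_left _ (by positivity)
        have := mul_le_mul h1 h3 hB (by positivity)
        linarith
    _ = 6 * ‖s‖ := by field_simp; ring
end

section
/- There exists a constant C > 0 such that for every time step k with 0 < k ≤ 1 and every complex number s with Re s > 0, the BDF2 symbol satisfies the stability estimate Re s_k ≥ C · min{1, Re s}. -/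
/-- There is a constant C > 0 such that for every time step 0 < k ≤ 1 and every
s ∈ ℂ with Re s > 0, the BDF2 symbol satisfies the stability estimate
Re s_k ≥ C min{1, Re s}. -/
theorem stmt11 :
    ∃ C : ℝ, 0 < C ∧ ∀ k : ℝ, 0 < k → k ≤ 1 → ∀ s : ℂ, 0 < s.re →
      C * min 1 s.re ≤ (bdf2Symbol k s).re := by
  refine ⟨1/2, by norm_num, ?_⟩
  intro k hk hk1 s hs
  set w := Complex.exp (-s * k) with hw
  set x : ℝ := s.re * k with hx
  have hxpos : 0 < x := mul_pos hs hk
  set r : ℝ := Real.exp (-x) with hr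
  have hrpos : 0 < r := Real.exp_pos _
  have hr1 : r < 1 := by
    rw [hr, Real.exp_lt_one_iff]; linarith
  have habs : ‖w‖ = r := by
    rw [hw, Complex.norm_exp, hr]
    congr 1
    simp [Complex.mul_re, hx]
  set u : ℝ := w.re with hu
  set v : ℝ := w.im with hv
  have hsum : u ^ 2 + v ^ 2 = r ^ 2 := by
    have := Complex.sq_norm w
    rw [habs, Complex.normSq_apply] at this
    simp only [hu, hv]
    rw [this]; ring
  have hur : u ≤ r := habs ▸ Complex.re_le_norm w
  have hw2 : Complex.exp (-2 * s * (k : ℂ)) = w * w := by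
    rw [hw, ← Complex.exp_add]
    ring_nf
  have hre : (bdf2Symbol k s).re = (1 / k) * (3 / 2 - 2 * u + (u ^ 2 - v ^ 2) / 2) := by
    rw [bdf2Symbol, hw2, ← hw]
    have h1 : (1 / (k : ℂ)) = ((1 / k : ℝ) : ℂ) := by push_cast; ring
    rw [h1, Complex.re_ofReal_mul]
    congr 1
    simp [Complex.sub_re, Complex.add_re, Complex.mul_re, ← hu, ← hv]
    norm_num
    ring
  -- key: Re δ(ζ) ≥ 1 - r
  have hkey : 1 - r ≤ 3 / 2 - 2 * u + (u ^ 2 - v ^ 2) / 2 := by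
    nlinarith [sq_nonneg (1 - r), mul_nonneg (sub_nonneg.2 hur) (by nlinarith : (0:ℝ) ≤ 2 - u - r)]
  -- 1 - r ≥ x/(1+x)
  have hrx : r ≤ 1 / (1 + x) := by
    rw [hr, Real.exp_neg, inv_eq_one_div]
    apply one_div_le_one_div_of_le (by linarith)
    linarith [Real.add_one_le_exp x]
  have h1x : (0:ℝ) < 1 + x := by linarith
  have hfin : (1/2) * min 1 s.re ≤ (1 / k) * (1 - r) := by
    have hmin1 : min 1 s.re ≤ 1 := min_le_left _ _
    have hmins : min 1 s.re ≤ s.re := min_le_right _ _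
    have hminnn : 0 ≤ min 1 s.re := le_min (by norm_num) hs.le
    have h2 : (1/2) * min 1 s.re ≤ (1 / k) * (x / (1 + x)) := by
      have heq : (1 / k) * (x / (1 + x)) = x / (k * (1 + x)) := by
        field_simp
      rw [heq, le_div_iff₀ (by positivity)]
      nlinarith [mul_le_mul_of_nonneg_right hmins hk.le,
        mul_nonneg hminnn hk.le, mul_pos hk h1x,
        mul_le_mul_of_nonneg_right (mul_le_one₀ hmin1 hk.le hk1) (mul_pos hs hk).le]
    have h3 : x / (1 + x) ≤ 1 - r := by
      have : x / (1 + x) = 1 - 1 / (1 + x) := by field_simp; ring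
      rw [this]; linarith
    calc (1/2) * min 1 s.re ≤ (1 / k) * (x / (1 + x)) := h2
      _ ≤ (1 / k) * (1 - r) := by
          apply mul_le_mul_of_nonneg_left h3 (by positivity)
  rw [hre]
  calc (1/2) * min 1 s.re ≤ (1 / k) * (1 - r) := hfin
    _ ≤ (1 / k) * (3 / 2 - 2 * u + (u ^ 2 - v ^ 2) / 2) :=
        mul_le_mul_of_nonneg_left hkey (by positivity)
end

section
/- Let f : ℝ → X be a causal function, let k > 0, and let t ∈ ℝ. Then ‖f(t)‖_X ≤ k · Σ_{j=0}^{∞} ‖(∂_k f)(t − j k)‖_X, where the sum has only finitely many nonzero terms because f is causal (terms with t − j k < 0 vanish). -/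
/-- For a causal function f : ℝ → X (f vanishing on (−∞,0)), a time step k > 0 and any
t ∈ ℝ, one has ‖f(t)‖ ≤ k · Σ_{j=0}^∞ ‖(∂_k f)(t − jk)‖, where
(∂_k f)(s) = (1/k)((3/2) f(s) − 2 f(s−k) + (1/2) f(s−2k)) is the BDF2 backward
difference; only finitely many terms of the sum are nonzero since f is causal. -/
theorem stmt13 {X : Type*} [NormedAddCommGroup X] [NormedSpace ℝ X] [CompleteSpace X]
    (f : ℝ → X) (hf : ∀ t < (0:ℝ), f t = 0) (k : ℝ) (hk : 0 < k) (t : ℝ) :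
    ‖f t‖ ≤ k * ∑' j : ℕ,
      ‖(1 / k) • ((3 / 2 : ℝ) • f (t - j * k) - (2 : ℝ) • f (t - j * k - k)
          + (1 / 2 : ℝ) • f (t - j * k - 2 * k))‖ := by
  set g : ℕ → X := fun j => (3 / 2 : ℝ) • f (t - j * k) - (2 : ℝ) • f (t - j * k - k)
          + (1 / 2 : ℝ) • f (t - j * k - 2 * k) with hg
  -- choose N with t < N * k
  obtain ⟨N, hN⟩ : ∃ N : ℕ, t < N * k := by
    obtain ⟨N, hN⟩ := exists_nat_gt (t / k)
    exact ⟨N, by rwa [div_lt_iff₀ hk] at hN⟩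
  have hNle : ∀ j : ℕ, N ≤ j → t < j * k := fun j hj =>
    hN.trans_le (mul_le_mul_of_nonneg_right (by exact_mod_cast hj) hk.le)
  have hf0 : ∀ j : ℕ, N ≤ j → f (t - j * k) = 0 := fun j hj =>
    hf _ (by linarith [hNle j hj])
  have hf1 : ∀ j : ℕ, N ≤ j → f (t - j * k - k) = 0 := fun j hj =>
    hf _ (by linarith [hNle j hj])
  have hf2 : ∀ j : ℕ, N ≤ j → f (t - j * k - 2 * k) = 0 := fun j hj =>
    hf _ (by linarith [hNle j hj])
  have hgz : ∀ j : ℕ, N ≤ j → g j = 0 := fun j hj => by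
    simp [hg, hf0 j hj, hf1 j hj, hf2 j hj]
  -- key inversion identity
  have key : ∀ n : ℕ, ∑ j ∈ Finset.range n, (1 - (1/3:ℝ)^(j+1)) • g j
      = f t - ((3/2 : ℝ) - (1/2) * (1/3)^n) • f (t - n * k)
        + ((1/2:ℝ) - (1/2) * (1/3)^n) • f (t - n * k - k) := by
    intro n
    induction n with
    | zero => simp; module
    | succ n ih =>
      rw [Finset.sum_range_succ, ih, hg]
      have e1 : t - ((n+1:ℕ):ℝ) * k = t - n * k - k := by push_cast; ring
      have e2 : t - ((n+1:ℕ):ℝ) * k - k = t - n * k - 2 * k := by push_cast; ring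
      rw [e2, e1]
      match_scalars <;> ring
  have hfid : f t = ∑ j ∈ Finset.range N, (1 - (1/3:ℝ)^(j+1)) • g j := by
    rw [key N, hf0 N le_rfl, hf1 N le_rfl]
    simp
  -- bound the finite sum
  have hcoef : ∀ j : ℕ, |1 - (1/3:ℝ)^(j+1)| ≤ 1 := by
    intro j
    have h1 : (1/3:ℝ)^(j+1) ≤ 1 := pow_le_one₀ (by norm_num) (by norm_num)
    have h2 : (0:ℝ) ≤ (1/3:ℝ)^(j+1) := by positivity
    rw [abs_of_nonneg (by linarith)]
    linarith
  have hbound : ‖f t‖ ≤ ∑ j ∈ Finset.range N, ‖g j‖ := by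
    rw [hfid]
    refine (norm_sum_le _ _).trans (Finset.sum_le_sum fun j _ => ?_)
    rw [norm_smul, Real.norm_eq_abs]
    calc |1 - (1/3:ℝ)^(j+1)| * ‖g j‖ ≤ 1 * ‖g j‖ :=
          mul_le_mul_of_nonneg_right (hcoef j) (norm_nonneg _)
      _ = ‖g j‖ := one_mul _
  -- identify the tsum
  have hts : ∑' j : ℕ, ‖(1 / k) • g j‖ = ∑ j ∈ Finset.range N, ‖(1 / k) • g j‖ := by
    refine tsum_eq_sum fun j hj => ?_
    rw [hgz j (by simpa using hj)]
    simp
  show ‖f t‖ ≤ k * ∑' j : ℕ, ‖(1 / k) • g j‖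
  rw [hts]
  have : k * ∑ j ∈ Finset.range N, ‖(1 / k) • g j‖ = ∑ j ∈ Finset.range N, ‖g j‖ := by
    rw [Finset.mul_sum]
    refine Finset.sum_congr rfl fun j _ => ?_
    rw [norm_smul, Real.norm_eq_abs, abs_of_nonneg (by positivity)]
    field_simp
  rw [this]
  exact hbound
end
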